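/- arXiv:1806.05340 — 15 statements merged into one kernel-verified Lean document; each statement's English description precedes it below -/
import Mathlib

section
/- Let F_a and F_b be real polynomials of total degree at most 2 in two variables, let p = (c,d) ∈ ℝ², and let (u,v) ∈ ℝ² be a point at which G₂ ≠ 0. Then the point (x,y) = ι_p(u,v) (the generalised Manin involution with degree parameter D = 2, so z = −2G₁/G₂) satisfies F_a(x,y)·F_b(u,v) = F_a(u,v)·F_b(x,y); that is, ι_p maps each curve of the quadratic pencil αF_a + βF_b = 0 to itself. -/
open MvPolynomial

/-- Evaluation of a bivariate polynomial at a point of the plane. -/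
noncomputable def pev (F : MvPolynomial (Fin 2) ℝ) (w : ℝ × ℝ) : ℝ :=
  eval ![w.1, w.2] F

/-- First directional quantity `F⁽¹⁾ = (c−u)Fᵤ + (d−v)Fᵥ` at `w = (u,v)`, direction point `p = (c,d)`. -/
noncomputable def d1 (F : MvPolynomial (Fin 2) ℝ) (p w : ℝ × ℝ) : ℝ :=
  (p.1 - w.1) * pev (pderiv (0 : Fin 2) F) w + (p.2 - w.2) * pev (pderiv (1 : Fin 2) F) w

/-- Second directional quantity `F⁽²⁾` at `w = (u,v)`, direction point `p = (c,d)`. -/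
noncomputable def d2 (F : MvPolynomial (Fin 2) ℝ) (p w : ℝ × ℝ) : ℝ :=
  (p.1 - w.1) ^ 2 * pev (pderiv (0 : Fin 2) (pderiv (0 : Fin 2) F)) w
    + 2 * (p.1 - w.1) * (p.2 - w.2) * pev (pderiv (1 : Fin 2) (pderiv (0 : Fin 2) F)) w
    + (p.2 - w.2) ^ 2 * pev (pderiv (1 : Fin 2) (pderiv (1 : Fin 2) F)) w

/-- `G₁ = F_a·F_b⁽¹⁾ − F_a⁽¹⁾·F_b`. -/
noncomputable def G1 (Fa Fb : MvPolynomial (Fin 2) ℝ) (p w : ℝ × ℝ) : ℝ :=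
  pev Fa w * d1 Fb p w - d1 Fa p w * pev Fb w

/-- `G₂ = F_a·F_b⁽²⁾ − F_a⁽²⁾·F_b`. -/
noncomputable def G2 (Fa Fb : MvPolynomial (Fin 2) ℝ) (p w : ℝ × ℝ) : ℝ :=
  pev Fa w * d2 Fb p w - d2 Fa p w * pev Fb w

/-- The defining denominator `2(2−D)G₁ − G₂` of the generalised Manin involution. -/
noncomputable def den (Fa Fb : MvPolynomial (Fin 2) ℝ) (D : ℕ) (p w : ℝ × ℝ) : ℝ :=
  2 * (2 - (D : ℝ)) * G1 Fa Fb p w - G2 Fa Fb p w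

/-- The generalised Manin involution `ι_p(u,v) = (u,v) + z·(p − (u,v))`
with `z = 2G₁ / (2(2−D)G₁ − G₂)`. -/
noncomputable def manin (Fa Fb : MvPolynomial (Fin 2) ℝ) (D : ℕ) (p w : ℝ × ℝ) : ℝ × ℝ :=
  w + (2 * G1 Fa Fb p w / den Fa Fb D p w) • (p - w)


lemma pderiv_two' (i : Fin 2) : pderiv i (2 : MvPolynomial (Fin 2) ℝ) = 0 := by
  have h : (2 : MvPolynomial (Fin 2) ℝ) = C 2 := (map_ofNat C 2).symm
  rw [h, pderiv_C]

lemma mono_eq' (a b : ℕ) (c : ℝ) :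
    (monomial (Finsupp.single 0 a + Finsupp.single 1 b) c : MvPolynomial (Fin 2) ℝ)
      = C c * X 0 ^ a * X 1 ^ b := by
  rw [X_pow_eq_monomial, X_pow_eq_monomial, mul_assoc, monomial_mul, C_mul_monomial]
  simp

lemma taylor2_mono' (a b : ℕ) (hab : a + b ≤ 2) (c : ℝ) (p w : ℝ × ℝ) (z : ℝ) :
    pev (monomial (Finsupp.single 0 a + Finsupp.single 1 b) c) (w + z • (p - w)) =
      pev (monomial (Finsupp.single 0 a + Finsupp.single 1 b) c) w
        + z * d1 (monomial (Finsupp.single 0 a + Finsupp.single 1 b) c) p w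
        + z^2/2 * d2 (monomial (Finsupp.single 0 a + Finsupp.single 1 b) c) p w := by
  rw [mono_eq']
  have ha : a ≤ 2 := by omega
  have hb : b ≤ 2 := by omega
  interval_cases a <;> interval_cases b <;>
    first
      | omega
      | (simp [pev, d1, d2, Prod.smul_def, smul_eq_mul, pderiv_two']; try ring)

lemma pev_sum' (s : Finset (Fin 2 →₀ ℕ)) (g : (Fin 2 →₀ ℕ) → MvPolynomial (Fin 2) ℝ)
    (v : ℝ × ℝ) : pev (∑ m ∈ s, g m) v = ∑ m ∈ s, pev (g m) v := by
  simp [pev]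

lemma d1_sum' (s : Finset (Fin 2 →₀ ℕ)) (g : (Fin 2 →₀ ℕ) → MvPolynomial (Fin 2) ℝ)
    (p w : ℝ × ℝ) : d1 (∑ m ∈ s, g m) p w = ∑ m ∈ s, d1 (g m) p w := by
  simp [d1, pev, Finset.mul_sum, Finset.sum_add_distrib]

lemma d2_sum' (s : Finset (Fin 2 →₀ ℕ)) (g : (Fin 2 →₀ ℕ) → MvPolynomial (Fin 2) ℝ)
    (p w : ℝ × ℝ) : d2 (∑ m ∈ s, g m) p w = ∑ m ∈ s, d2 (g m) p w := by
  simp [d2, pev, Finset.mul_sum, Finset.sum_add_distrib]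

lemma taylor2' (F : MvPolynomial (Fin 2) ℝ) (hF : F.totalDegree ≤ 2) (p w : ℝ × ℝ) (z : ℝ) :
    pev F (w + z • (p - w)) = pev F w + z * d1 F p w + z^2/2 * d2 F p w := by
  have hm : ∀ m ∈ F.support, m 0 + m 1 ≤ 2 := by
    intro m hm
    have := MvPolynomial.le_totalDegree hm
    have h2 : (m.sum fun _ e => e) = m 0 + m 1 := by
      rw [Finsupp.sum_fintype _ _ (fun _ => rfl), Fin.sum_univ_two]
    omega
  have hrep : ∀ m : Fin 2 →₀ ℕ, m = Finsupp.single 0 (m 0) + Finsupp.single 1 (m 1) := by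
    intro m
    ext i
    fin_cases i <;> simp [Finsupp.single_apply]
  conv_lhs => rw [← F.support_sum_monomial_coeff]
  conv_rhs => rw [← F.support_sum_monomial_coeff]
  rw [pev_sum', pev_sum', d1_sum', d2_sum', Finset.mul_sum, Finset.mul_sum,
    ← Finset.sum_add_distrib, ← Finset.sum_add_distrib]
  refine Finset.sum_congr rfl fun m hmem => ?_
  conv_lhs => rw [hrep m]
  conv_rhs => rw [hrep m]
  exact taylor2_mono' _ _ (hm m hmem) _ p w z

/-- For a quadratic pencil (total degrees ≤ 2), at any point where `G₂ ≠ 0`,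
the generalised Manin involution with `D = 2` maps each curve of the pencil
`αF_a + βF_b = 0` to itself. -/
theorem manin_involution_preserves_quadratic_pencil
    (Fa Fb : MvPolynomial (Fin 2) ℝ)
    (hFa : Fa.totalDegree ≤ 2) (hFb : Fb.totalDegree ≤ 2)
    (p w : ℝ × ℝ) (hG2 : G2 Fa Fb p w ≠ 0) :
    pev Fa (manin Fa Fb 2 p w) * pev Fb w = pev Fa w * pev Fb (manin Fa Fb 2 p w) := by
  
  have hden : den Fa Fb 2 p w = -G2 Fa Fb p w := by
    simp [den]
  have hx : manin Fa Fb 2 p w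
      = w + (2 * G1 Fa Fb p w / -G2 Fa Fb p w) • (p - w) := by
    rw [manin, hden]
  set z := 2 * G1 Fa Fb p w / -G2 Fa Fb p w with hz
  rw [hx, taylor2' Fa hFa p w z, taylor2' Fb hFb p w z]
  have h1 : z * G2 Fa Fb p w = -(2 * G1 Fa Fb p w) := by
    rw [hz, div_neg, neg_mul, div_mul_cancel₀ _ hG2]
  have hG : G1 Fa Fb p w = pev Fa w * d1 Fb p w - d1 Fa p w * pev Fb w := rfl
  have hH : G2 Fa Fb p w = pev Fa w * d2 Fb p w - d2 Fa p w * pev Fb w := rfl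
  linear_combination z * hG + (z^2/2) * hH + (-(z/2)) * h1
end

section
/- Let F_a and F_b be real polynomials of total degree at most 2 in two variables and p = (c,d) ∈ ℝ². If (u,v) ∈ ℝ² is such that G₂ is nonzero at (u,v) and G₂ is nonzero at ι_p(u,v), then ι_p(ι_p(u,v)) = (u,v); that is, the generalised Manin involution with degree parameter D = 2 is an involution wherever it is defined. -/
/-! The pencil member `H = F_b(w) F_a - F_a(w) F_b` vanishes at `w`, and for quadratic `F_a, F_b`
its restriction to the line `t ↦ w + t • (p - w)` is `-t G₁ - t² G₂ / 2`. So for `D = 2` the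
point `ι_p(w)`, with parameter `z = -2 G₁ / G₂`, is the second intersection of that line with the
conic `H = 0`; from `ι_p(w)` the line and the conic are the same, so the second intersection is
`w` again. In coordinates, moving along the line rescales the directional quantities by powers of
`1 - t`, and the parameter of `w` seen from `ι_p(w)` comes out as `-z / (1 - z)`. -/

open MvPolynomial

/-- Along the line `t ↦ w + t • (p - w)`, `F` is the quadratic with Taylor coefficients
`F, F⁽¹⁾, F⁽²⁾` at `w`; since `p - (w + t • (p - w)) = (1 - t) • (p - w)`, the directional
quantities at the moving point are its `t`-derivatives times powers of `1 - t`. -/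
def TaylorOnLines (F : MvPolynomial (Fin 2) ℝ) : Prop :=
  ∀ p w : ℝ × ℝ, ∀ t : ℝ,
    pev F (w + t • (p - w)) = pev F w + t * d1 F p w + t ^ 2 / 2 * d2 F p w ∧
    d1 F p (w + t • (p - w)) = (1 - t) * (d1 F p w + t * d2 F p w) ∧
    d2 F p (w + t • (p - w)) = (1 - t) ^ 2 * d2 F p w

lemma pev_add (F G : MvPolynomial (Fin 2) ℝ) (w : ℝ × ℝ) :
    pev (F + G) w = pev F w + pev G w :=
  map_add _ F G

lemma d1_add (F G : MvPolynomial (Fin 2) ℝ) (p w : ℝ × ℝ) :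
    d1 (F + G) p w = d1 F p w + d1 G p w := by
  simp only [d1, map_add, pev_add]; ring

lemma d2_add (F G : MvPolynomial (Fin 2) ℝ) (p w : ℝ × ℝ) :
    d2 (F + G) p w = d2 F p w + d2 G p w := by
  simp only [d2, map_add, pev_add]; ring

lemma taylorOnLines_zero : TaylorOnLines 0 := by
  intro p w t
  simp [pev, d1, d2]

lemma TaylorOnLines.add {F G : MvPolynomial (Fin 2) ℝ} (hF : TaylorOnLines F)
    (hG : TaylorOnLines G) : TaylorOnLines (F + G) := by
  intro p w t
  obtain ⟨hF0, hF1, hF2⟩ := hF p w t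
  obtain ⟨hG0, hG1, hG2⟩ := hG p w t
  refine ⟨?_, ?_, ?_⟩ <;>
    simp only [pev_add, d1_add, d2_add, hF0, hF1, hF2, hG0, hG1, hG2] <;> ring

lemma taylorOnLines_C_mul_X_pow_mul_X_pow {a b : ℕ} (hab : a + b ≤ 2) (c : ℝ) :
    TaylorOnLines (C c * (X 0 ^ a * X 1 ^ b)) := by
  intro p w t
  have ha : a ≤ 2 := by omega
  have hb : b ≤ 2 := by omega
  interval_cases a <;> interval_cases b <;> try omega
  all_goals
    refine ⟨?_, ?_, ?_⟩ <;>
      simp [pev, d1, d2, sq] <;>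
      ring

lemma taylorOnLines_monomial {v : Fin 2 →₀ ℕ} (hv : v 0 + v 1 ≤ 2) (c : ℝ) :
    TaylorOnLines (monomial v c) := by
  have hv' : v = Finsupp.single 0 (v 0) + Finsupp.single 1 (v 1) := by
    ext i; fin_cases i <;> simp
  have hmon : C c * (X 0 ^ v 0 * X 1 ^ v 1) = (monomial v c : MvPolynomial (Fin 2) ℝ) := by
    rw [X_pow_eq_monomial, X_pow_eq_monomial, monomial_mul, C_mul_monomial, one_mul,
      mul_one, ← hv']
  exact hmon ▸ taylorOnLines_C_mul_X_pow_mul_X_pow hv c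

lemma taylorOnLines_of_totalDegree_le_two {F : MvPolynomial (Fin 2) ℝ}
    (hF : F.totalDegree ≤ 2) : TaylorOnLines F := by
  rw [F.as_sum]
  refine Finset.sum_induction _ TaylorOnLines (fun _ _ => TaylorOnLines.add)
    taylorOnLines_zero fun v hv => taylorOnLines_monomial ?_ _
  have hdeg : v.sum (fun _ e => e) ≤ 2 := (le_totalDegree hv).trans hF
  rwa [Finsupp.sum_fintype _ _ fun _ => rfl, Fin.sum_univ_two] at hdeg

section Pencil

variable {Fa Fb : MvPolynomial (Fin 2) ℝ} {p w : ℝ × ℝ}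

noncomputable def G12 (Fa Fb : MvPolynomial (Fin 2) ℝ) (p w : ℝ × ℝ) : ℝ :=
  d1 Fa p w * d2 Fb p w - d2 Fa p w * d1 Fb p w

lemma G1_add_smul_sub (hFa : TaylorOnLines Fa) (hFb : TaylorOnLines Fb) (t : ℝ) :
    G1 Fa Fb p (w + t • (p - w)) =
      (1 - t) * (G1 Fa Fb p w + t * G2 Fa Fb p w + t ^ 2 / 2 * G12 Fa Fb p w) := by
  obtain ⟨ha0, ha1, -⟩ := hFa p w t
  obtain ⟨hb0, hb1, -⟩ := hFb p w t
  rw [G1, ha0, ha1, hb0, hb1, G1, G2, G12]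
  ring

lemma G2_add_smul_sub (hFa : TaylorOnLines Fa) (hFb : TaylorOnLines Fb) (t : ℝ) :
    G2 Fa Fb p (w + t • (p - w)) = (1 - t) ^ 2 * (G2 Fa Fb p w + t * G12 Fa Fb p w) := by
  obtain ⟨ha0, -, ha2⟩ := hFa p w t
  obtain ⟨hb0, -, hb2⟩ := hFb p w t
  rw [G2, ha0, ha2, hb0, hb2, G2, G12]
  ring

lemma neg_two_G1_div_G2_add_smul_sub (hFa : TaylorOnLines Fa) (hFb : TaylorOnLines Fb) {z : ℝ}
    (hz : z * G2 Fa Fb p w = -(2 * G1 Fa Fb p w)) (hG2 : G2 Fa Fb p (w + z • (p - w)) ≠ 0) :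
    -(2 * G1 Fa Fb p (w + z • (p - w))) / G2 Fa Fb p (w + z • (p - w)) * (1 - z) = -z := by
  rw [G2_add_smul_sub hFa hFb] at hG2 ⊢
  have h1z : 1 - z ≠ 0 := fun h => hG2 (by rw [h]; ring)
  have hG2' : G2 Fa Fb p w + z * G12 Fa Fb p w ≠ 0 := fun h => hG2 (by rw [h]; ring)
  rw [G1_add_smul_sub hFa hFb]
  field_simp
  linear_combination -hz

end Pencil

lemma add_smul_sub_add_smul_sub {R M : Type*} [CommRing R] [AddCommGroup M] [Module R M]
    (p w : M) (s t : R) :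
    w + s • (p - w) + t • (p - (w + s • (p - w))) = w + (s + t * (1 - s)) • (p - w) := by
  module

lemma manin_two_apply (Fa Fb : MvPolynomial (Fin 2) ℝ) (p w : ℝ × ℝ) :
    manin Fa Fb 2 p w = w + (-(2 * G1 Fa Fb p w) / G2 Fa Fb p w) • (p - w) := by
  rw [manin, den, neg_div, ← div_neg]
  norm_num

/-- For a quadratic pencil (total degrees ≤ 2), the generalised Manin
involution with `D = 2` is an involution wherever it is defined (i.e. wherever the
defining denominator `−G₂` is nonzero, at the point and at its image). -/
theorem manin_involution_is_involution_quadratic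
    (Fa Fb : MvPolynomial (Fin 2) ℝ)
    (hFa : Fa.totalDegree ≤ 2) (hFb : Fb.totalDegree ≤ 2)
    (p w : ℝ × ℝ) (hG2 : G2 Fa Fb p w ≠ 0)
    (hG2' : G2 Fa Fb p (manin Fa Fb 2 p w) ≠ 0) :
    manin Fa Fb 2 p (manin Fa Fb 2 p w) = w := by
  have hTa := taylorOnLines_of_totalDegree_le_two hFa
  have hTb := taylorOnLines_of_totalDegree_le_two hFb
  set z := -(2 * G1 Fa Fb p w) / G2 Fa Fb p w
  have hz : z * G2 Fa Fb p w = -(2 * G1 Fa Fb p w) := div_mul_cancel₀ _ hG2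
  rw [manin_two_apply Fa Fb p w] at hG2' ⊢
  rw [manin_two_apply, add_smul_sub_add_smul_sub,
    neg_two_G1_div_G2_add_smul_sub hTa hTb hz hG2', add_neg_cancel, zero_smul, add_zero]
end

section
/- Let F_a and F_b be real polynomials of total degree at most 3 in two variables, and let p = (c,d) ∈ ℝ² be a base point of the pencil, i.e. F_a(c,d) = 0 and F_b(c,d) = 0. Then for every (u,v) ∈ ℝ² at which −2G₁ − G₂ ≠ 0, the point (x,y) = ι_p(u,v) (the generalised Manin involution with degree parameter D = 3, so z = 2G₁/(−2G₁ − G₂)) satisfies F_a(x,y)·F_b(u,v) = F_a(u,v)·F_b(x,y); that is, ι_p maps each curve of the cubic pencil αF_a + βF_b = 0 to itself. -/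
open MvPolynomial

/-!
Restricted to the line `t ↦ w + t • (p - w)`, a cubic `F` becomes a cubic polynomial in `t` with
coefficients `F(w)`, `F⁽¹⁾`, `F⁽²⁾/2` and a leading one fixed by the value `F(p)` at `t = 1`. Hence
`F_a(t)·F_b(w) − F_a(w)·F_b(t)` is a cubic in `t` vanishing at `t = 0` and, as `p` is a base point,
at `t = 1`; the remaining factor `G₁ + (G₁ + G₂/2)·t` vanishes at `t = 2G₁/(−2G₁ − G₂)`, the
parameter of the Manin involution for `D = 3`.
-/

namespace ManinCubic

variable {p w : ℝ × ℝ}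

lemma pev_add (F G : MvPolynomial (Fin 2) ℝ) (w : ℝ × ℝ) :
    pev (F + G) w = pev F w + pev G w := by
  simp [pev]

lemma pev_smul (c : ℝ) (F : MvPolynomial (Fin 2) ℝ) (w : ℝ × ℝ) :
    pev (c • F) w = c * pev F w := by
  simp [pev]

lemma d1_add (F G : MvPolynomial (Fin 2) ℝ) (p w : ℝ × ℝ) :
    d1 (F + G) p w = d1 F p w + d1 G p w := by
  simp only [d1, map_add, pev_add]; ring

lemma d1_smul (c : ℝ) (F : MvPolynomial (Fin 2) ℝ) (p w : ℝ × ℝ) :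
    d1 (c • F) p w = c * d1 F p w := by
  simp only [d1, Derivation.map_smul, pev_smul]; ring

lemma d2_add (F G : MvPolynomial (Fin 2) ℝ) (p w : ℝ × ℝ) :
    d2 (F + G) p w = d2 F p w + d2 G p w := by
  simp only [d2, map_add, pev_add]; ring

lemma d2_smul (c : ℝ) (F : MvPolynomial (Fin 2) ℝ) (p w : ℝ × ℝ) :
    d2 (c • F) p w = c * d2 F p w := by
  simp only [d2, Derivation.map_smul, pev_smul]; ring

/-- The `t³` coefficient is written through `F(p)`, the value at `t = 1`, instead of through third
derivatives. -/
def HasCubicExpansion (F : MvPolynomial (Fin 2) ℝ) (p w : ℝ × ℝ) : Prop :=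
  ∀ t : ℝ, pev F (w + t • (p - w)) =
    pev F w + t * d1 F p w + t ^ 2 / 2 * d2 F p w
      + t ^ 3 * (pev F p - pev F w - d1 F p w - d2 F p w / 2)

def cubicExpansionSubmodule (p w : ℝ × ℝ) : Submodule ℝ (MvPolynomial (Fin 2) ℝ) where
  carrier := {F | HasCubicExpansion F p w}
  zero_mem' t := by simp [pev, d1, d2]
  add_mem' {F G} hF hG t := by
    simp only [pev_add, d1_add, d2_add, hF t, hG t]; ring
  smul_mem' c F hF t := by
    simp only [pev_smul, d1_smul, d2_smul, hF t]; ring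

lemma hasCubicExpansion_X_pow_mul_X_pow {i j : ℕ} (hij : i + j ≤ 3) :
    HasCubicExpansion (X 0 ^ i * X 1 ^ j) p w := by
  intro t
  obtain ⟨hi, hj⟩ : i ≤ 3 ∧ j ≤ 3 - i := by omega
  interval_cases i <;> interval_cases j <;>
    simp [pev, d1, d2, pow_succ, pderiv_X] <;> ring

lemma hasCubicExpansion_of_totalDegree_le_three {F : MvPolynomial (Fin 2) ℝ}
    (hF : F.totalDegree ≤ 3) : HasCubicExpansion F p w := by
  show F ∈ cubicExpansionSubmodule p w
  rw [F.as_sum]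
  refine Submodule.sum_mem _ fun m hm => ?_
  have hdeg : m 0 + m 1 ≤ 3 := by
    simpa [Finsupp.degree, Finsupp.sum_fintype, Fin.sum_univ_two] using
      (le_totalDegree hm).trans hF
  rw [monomial_eq, Finsupp.prod_pow, Fin.prod_univ_two, C_mul']
  exact Submodule.smul_mem _ _ (hasCubicExpansion_X_pow_mul_X_pow hdeg)

lemma pev_mul_pev_sub_pev_mul_pev {Fa Fb : MvPolynomial (Fin 2) ℝ} (ha : HasCubicExpansion Fa p w)
    (hb : HasCubicExpansion Fb p w) (hpa : pev Fa p = 0) (hpb : pev Fb p = 0) (t : ℝ) :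
    pev Fa (w + t • (p - w)) * pev Fb w - pev Fa w * pev Fb (w + t • (p - w)) =
      t * (G1 Fa Fb p w + (G1 Fa Fb p w + G2 Fa Fb p w / 2) * t) * (t - 1) := by
  rw [ha t, hb t, hpa, hpb, G1, G2]
  ring

lemma mul_linear_factor_eq_zero {g₁ g₂ z : ℝ} (hz : z = 2 * g₁ / (-2 * g₁ - g₂)) :
    z * (g₁ + (g₁ + g₂ / 2) * z) = 0 := by
  subst hz
  rcases eq_or_ne (-2 * g₁ - g₂) 0 with h | h
  · -- a vanishing denominator gives `z = 0` (as `x / 0 = 0`), which is a root as well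
    rw [h, div_zero, zero_mul]
  · refine mul_eq_zero_of_right _ ?_
    rw [← mul_div_assoc, add_div' _ _ _ h, div_eq_zero_iff]
    left
    ring

end ManinCubic

open ManinCubic in
theorem manin_involution_preserves_cubic_pencil_general
    (Fa Fb : MvPolynomial (Fin 2) ℝ)
    (hFa : Fa.totalDegree ≤ 3) (hFb : Fb.totalDegree ≤ 3)
    (p : ℝ × ℝ) (hpa : pev Fa p = 0) (hpb : pev Fb p = 0)
    (w : ℝ × ℝ) :
    pev Fa (manin Fa Fb 3 p w) * pev Fb w = pev Fa w * pev Fb (manin Fa Fb 3 p w) := by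
  have hden : den Fa Fb 3 p w = -2 * G1 Fa Fb p w - G2 Fa Fb p w := by norm_num [den]
  rw [← sub_eq_zero, manin, pev_mul_pev_sub_pev_mul_pev
    (hasCubicExpansion_of_totalDegree_le_three hFa) (hasCubicExpansion_of_totalDegree_le_three hFb)
    hpa hpb, mul_linear_factor_eq_zero (by rw [hden]), zero_mul]

/-- For a cubic pencil (total degrees ≤ 3) with base point `p`
(`F_a(p) = F_b(p) = 0`), the generalised Manin involution with `D = 3` maps each
curve of the pencil to itself, wherever its defining denominator `−2G₁ − G₂`
(which is `den Fa Fb 3 p w`) is nonzero. -/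
theorem manin_involution_preserves_cubic_pencil
    (Fa Fb : MvPolynomial (Fin 2) ℝ)
    (hFa : Fa.totalDegree ≤ 3) (hFb : Fb.totalDegree ≤ 3)
    (p : ℝ × ℝ) (hpa : pev Fa p = 0) (hpb : pev Fb p = 0)
    (w : ℝ × ℝ) (hden : den Fa Fb 3 p w ≠ 0) :
    pev Fa (manin Fa Fb 3 p w) * pev Fb w = pev Fa w * pev Fb (manin Fa Fb 3 p w) :=
  manin_involution_preserves_cubic_pencil_general Fa Fb hFa hFb p hpa hpb w
end

section
/- Let F_a and F_b be real polynomials of total degree at most 4 in two variables, and let p = (c,d) ∈ ℝ² be a double base point of the pencil, i.e. F_a, ∂F_a/∂u, ∂F_a/∂v, F_b, ∂F_b/∂u and ∂F_b/∂v all vanish at (c,d). Then for every (u,v) ∈ ℝ² at which −4G₁ − G₂ ≠ 0, the point (x,y) = ι_p(u,v) (the generalised Manin involution with degree parameter D = 4, so z = 2G₁/(−4G₁ − G₂)) satisfies F_a(x,y)·F_b(u,v) = F_a(u,v)·F_b(x,y); that is, ι_p maps each curve of the quartic pencil αF_a + βF_b = 0 to itself. -/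
open MvPolynomial

/-!
Restrict the pencil member `F_a(w)·F_b − F_b(w)·F_a` through `w` to the line
`t ↦ w + t·(p − w)`. This gives a quartic `h` in `t` with a root at `t = 0` (the curve passes
through `w`) and a double root at `t = 1` (`p` is a double base point), so
`h = t (t − 1)² (a t + b)`. Its first two derivatives at `0` are `G₁` and `G₂`, whence
`−4G₁ − G₂ = −2a` and `z = 2G₁ / (−4G₁ − G₂) = −b/a` is the fourth root of `h`:
the line meets the curve through `w` once more, at `ι_p(w)`.
-/

namespace Polynomial

theorem eq_X_mul_X_sub_one_sq_mul_of_natDegree_le_four {R : Type*} [CommRing R] {h : R[X]}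
    (hdeg : h.natDegree ≤ 4) (h0 : h.eval 0 = 0) (h1 : h.eval 1 = 0)
    (h1' : h.derivative.eval 1 = 0) :
    h = X * (X - 1) ^ 2 * (C (h.coeff 4) * X + C (h.coeff 1)) := by
  have hsum := h.as_sum_range_C_mul_X_pow' (n := 5) (by omega)
  simp only [Finset.sum_range_succ, Finset.sum_range_zero, zero_add, pow_zero, mul_one,
    pow_one] at hsum
  rw [hsum] at h0 h1 h1'
  simp only [eval_add, eval_mul, eval_C, eval_X, eval_pow, derivative_add, derivative_mul,
    derivative_C, derivative_X, derivative_X_pow] at h0 h1 h1'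
  norm_num at h0 h1 h1'
  replace h0 := congrArg C h0
  replace h1 := congrArg C h1
  replace h1' := congrArg C h1'
  simp only [map_add, map_mul, map_ofNat, map_zero] at h0 h1 h1'
  conv_lhs => rw [hsum]
  -- the conditions at `1` say `c₂ = c₄ - 2c₁` and `c₃ = c₁ - 2c₄`
  linear_combination (1 - 3 * X ^ 2 + 2 * X ^ 3 : R[X]) * h0
    + (3 * X ^ 2 - 2 * X ^ 3 : R[X]) * h1 + (X ^ 3 - X ^ 2 : R[X]) * h1'

theorem eval_eq_zero_of_eq_X_mul_X_sub_one_sq_mul {K : Type*} [Field K] {h : K[X]} {a b : K}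
    (hh : h = X * (X - 1) ^ 2 * (C a * X + C b)) :
    h.eval (2 * h.derivative.eval 0
      / (-4 * h.derivative.eval 0 - h.derivative.derivative.eval 0)) = 0 := by
  have hd : h.derivative.eval 0 = b := by
    simp [hh, derivative_mul]
  have hdd : h.derivative.derivative.eval 0 = 2 * a - 4 * b := by
    simp [hh, derivative_mul, derivative_pow]
    ring
  rw [hd, hdd, show -4 * b - (2 * a - 4 * b) = -(2 * a) by ring]
  rcases eq_or_ne (2 * a) 0 with h2a | h2a
  · simp [hh, h2a]
  · have hroot : a * (2 * b / -(2 * a)) + b = 0 := by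
      rw [div_neg, mul_neg, mul_div_assoc', show a * (2 * b) = 2 * a * b by ring,
        mul_div_cancel_left₀ _ h2a, neg_add_cancel]
    simp [hh, hroot]

end Polynomial

namespace MvPolynomial

variable {R σ : Type*} [CommRing R]

theorem pderiv_pderiv_comm (i j : σ) (F : MvPolynomial σ R) :
    pderiv i (pderiv j F) = pderiv j (pderiv i F) := by
  have pderiv_pderiv_X (i j k : σ) : pderiv i (pderiv j (X k : MvPolynomial σ R)) = 0 := by
    rcases eq_or_ne k j with rfl | h
    · simp
    · simp [pderiv_X_of_ne h]
  induction F using MvPolynomial.induction_on with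
  | C a => simp
  | add f g hf hg => simp [hf, hg]
  | mul_X f k hf =>
    simp only [pderiv_mul, map_add, hf, pderiv_pderiv_X]
    ring

noncomputable def restrictToLine (w v : σ → R) : MvPolynomial σ R →ₐ[R] Polynomial R :=
  aeval fun i => Polynomial.C (v i) * Polynomial.X + Polynomial.C (w i)

@[simp]
theorem restrictToLine_X (w v : σ → R) (i : σ) :
    restrictToLine w v (X i) = Polynomial.C (v i) * Polynomial.X + Polynomial.C (w i) :=
  aeval_X _ _

@[simp]
theorem restrictToLine_C (w v : σ → R) (a : R) : restrictToLine w v (C a) = Polynomial.C a :=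
  aeval_C _ _

theorem eval_restrictToLine (w v : σ → R) (F : MvPolynomial σ R) (t : R) :
    (restrictToLine w v F).eval t = eval (w + t • v) F := by
  rw [← Polynomial.coe_aeval_eq_eval, restrictToLine, ← AlgHom.comp_apply, comp_aeval,
    ← coe_aeval_eq_eval, AlgHom.coe_toRingHom]
  congr 2
  funext i
  simp only [map_add, map_mul, Polynomial.aeval_C, Polynomial.aeval_X, Pi.add_apply,
    Pi.smul_apply, smul_eq_mul, Algebra.algebraMap_self, RingHom.id_apply]
  ring

theorem natDegree_restrictToLine_le (w v : σ → R) (F : MvPolynomial σ R) :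
    (restrictToLine w v F).natDegree ≤ F.totalDegree := by
  simpa [restrictToLine] using
    aeval_natDegree_le F le_rfl _ fun i => Polynomial.natDegree_linear_le

section dirDeriv

variable [Fintype σ] (v : σ → R)

noncomputable def dirDeriv : Derivation R (MvPolynomial σ R) (MvPolynomial σ R) :=
  ∑ i, v i • pderiv i

theorem dirDeriv_apply (F : MvPolynomial σ R) : dirDeriv v F = ∑ i, v i • pderiv i F := by
  rw [dirDeriv, ← Derivation.coeFnAddMonoidHom_apply, map_sum, Finset.sum_apply]
  rfl

theorem dirDeriv_X (k : σ) : dirDeriv v (X k) = C (v k) := by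
  classical
  simp [dirDeriv_apply, pderiv_X, Pi.single_apply, smul_eq_C_mul]

theorem pderiv_dirDeriv (i : σ) (F : MvPolynomial σ R) :
    pderiv i (dirDeriv v F) = dirDeriv v (pderiv i F) := by
  simp [dirDeriv_apply, pderiv_pderiv_comm i]

theorem derivative_restrictToLine (w : σ → R) (F : MvPolynomial σ R) :
    Polynomial.derivative (restrictToLine w v F) = restrictToLine w v (dirDeriv v F) := by
  induction F using MvPolynomial.induction_on with
  | C a => simp
  | add f g hf hg => simp [hf, hg]
  | mul_X f k hf =>
    rw [map_mul, Polynomial.derivative_mul, hf, Derivation.leibniz, dirDeriv_X]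
    simp only [smul_eq_mul, map_add, map_mul, restrictToLine_X, restrictToLine_C,
      Polynomial.derivative_C_mul_X, Polynomial.derivative_C, add_zero]
    ring

end dirDeriv

end MvPolynomial

noncomputable def restrictToLineThrough (p w : ℝ × ℝ) :
    MvPolynomial (Fin 2) ℝ →ₐ[ℝ] Polynomial ℝ :=
  restrictToLine ![w.1, w.2] ![p.1 - w.1, p.2 - w.2]

theorem eval_restrictToLineThrough (p w : ℝ × ℝ) (F : MvPolynomial (Fin 2) ℝ) (t : ℝ) :
    (restrictToLineThrough p w F).eval t = pev F (w + t • (p - w)) := by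
  rw [restrictToLineThrough, eval_restrictToLine, pev]
  congr 2
  funext i
  fin_cases i <;> simp

theorem derivative_restrictToLineThrough (p w : ℝ × ℝ) (F : MvPolynomial (Fin 2) ℝ) :
    Polynomial.derivative (restrictToLineThrough p w F)
      = restrictToLineThrough p w (dirDeriv ![p.1 - w.1, p.2 - w.2] F) :=
  derivative_restrictToLine _ _ _

theorem pev_dirDeriv (p w x : ℝ × ℝ) (F : MvPolynomial (Fin 2) ℝ) :
    pev (dirDeriv ![p.1 - w.1, p.2 - w.2] F) x
      = (p.1 - w.1) * pev (pderiv 0 F) x + (p.2 - w.2) * pev (pderiv 1 F) x := by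
  simp [pev, dirDeriv_apply, Fin.sum_univ_two]

theorem d1_eq_pev_dirDeriv (F : MvPolynomial (Fin 2) ℝ) (p w : ℝ × ℝ) :
    d1 F p w = pev (dirDeriv ![p.1 - w.1, p.2 - w.2] F) w := by
  rw [pev_dirDeriv, d1]

theorem d2_eq_pev_dirDeriv_dirDeriv (F : MvPolynomial (Fin 2) ℝ) (p w : ℝ × ℝ) :
    d2 F p w
      = pev (dirDeriv ![p.1 - w.1, p.2 - w.2] (dirDeriv ![p.1 - w.1, p.2 - w.2] F)) w := by
  rw [pev_dirDeriv, pderiv_dirDeriv, pderiv_dirDeriv, pev_dirDeriv, pev_dirDeriv, d2,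
    pderiv_pderiv_comm 0 1]
  ring

noncomputable def pencilMemberThrough (Fa Fb : MvPolynomial (Fin 2) ℝ) (w : ℝ × ℝ) :
    MvPolynomial (Fin 2) ℝ :=
  pev Fa w • Fb - pev Fb w • Fa

section pencilMemberThrough

variable (Fa Fb : MvPolynomial (Fin 2) ℝ) (w : ℝ × ℝ)

theorem totalDegree_pencilMemberThrough_le {n : ℕ} (hFa : Fa.totalDegree ≤ n)
    (hFb : Fb.totalDegree ≤ n) : (pencilMemberThrough Fa Fb w).totalDegree ≤ n :=
  (totalDegree_sub _ _).trans <| max_le ((totalDegree_smul_le _ _).trans hFb)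
    ((totalDegree_smul_le _ _).trans hFa)

theorem pev_pencilMemberThrough (x : ℝ × ℝ) :
    pev (pencilMemberThrough Fa Fb w) x = pev Fa w * pev Fb x - pev Fb w * pev Fa x := by
  simp [pencilMemberThrough, pev]

theorem pev_dirDeriv_pencilMemberThrough (v : Fin 2 → ℝ) (x : ℝ × ℝ) :
    pev (dirDeriv v (pencilMemberThrough Fa Fb w)) x
      = pev Fa w * pev (dirDeriv v Fb) x - pev Fb w * pev (dirDeriv v Fa) x := by
  simp [pencilMemberThrough, pev]

theorem pev_dirDeriv_dirDeriv_pencilMemberThrough (v : Fin 2 → ℝ) (x : ℝ × ℝ) :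
    pev (dirDeriv v (dirDeriv v (pencilMemberThrough Fa Fb w))) x
      = pev Fa w * pev (dirDeriv v (dirDeriv v Fb)) x
        - pev Fb w * pev (dirDeriv v (dirDeriv v Fa)) x := by
  simp [pencilMemberThrough, pev]

end pencilMemberThrough

noncomputable def pencilOnLine (Fa Fb : MvPolynomial (Fin 2) ℝ) (p w : ℝ × ℝ) : Polynomial ℝ :=
  restrictToLineThrough p w (pencilMemberThrough Fa Fb w)

section pencilOnLine

variable (Fa Fb : MvPolynomial (Fin 2) ℝ) (p w : ℝ × ℝ)

theorem eval_pencilOnLine (t : ℝ) :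
    (pencilOnLine Fa Fb p w).eval t
      = pev Fa w * pev Fb (w + t • (p - w)) - pev Fb w * pev Fa (w + t • (p - w)) := by
  rw [pencilOnLine, eval_restrictToLineThrough, pev_pencilMemberThrough]

theorem natDegree_pencilOnLine_le {n : ℕ} (hFa : Fa.totalDegree ≤ n)
    (hFb : Fb.totalDegree ≤ n) : (pencilOnLine Fa Fb p w).natDegree ≤ n :=
  (natDegree_restrictToLine_le _ _ _).trans (totalDegree_pencilMemberThrough_le Fa Fb w hFa hFb)

theorem pencilOnLine_eval_zero : (pencilOnLine Fa Fb p w).eval 0 = 0 := by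
  rw [eval_pencilOnLine, zero_smul, add_zero, mul_comm, sub_self]

theorem pencilOnLine_eval_one (hpa : pev Fa p = 0) (hpb : pev Fb p = 0) :
    (pencilOnLine Fa Fb p w).eval 1 = 0 := by
  rw [eval_pencilOnLine, one_smul, add_sub_cancel, hpa, hpb, mul_zero, mul_zero, sub_zero]

theorem derivative_pencilOnLine_eval_zero :
    (pencilOnLine Fa Fb p w).derivative.eval 0 = G1 Fa Fb p w := by
  rw [pencilOnLine, derivative_restrictToLineThrough, eval_restrictToLineThrough,
    pev_dirDeriv_pencilMemberThrough, G1, d1_eq_pev_dirDeriv, d1_eq_pev_dirDeriv]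
  simp only [zero_smul, add_zero]
  ring

theorem derivative_derivative_pencilOnLine_eval_zero :
    (pencilOnLine Fa Fb p w).derivative.derivative.eval 0 = G2 Fa Fb p w := by
  rw [pencilOnLine, derivative_restrictToLineThrough, derivative_restrictToLineThrough,
    eval_restrictToLineThrough, pev_dirDeriv_dirDeriv_pencilMemberThrough, G2,
    d2_eq_pev_dirDeriv_dirDeriv, d2_eq_pev_dirDeriv_dirDeriv]
  simp only [zero_smul, add_zero]
  ring

theorem derivative_pencilOnLine_eval_one
    (hpau : pev (pderiv 0 Fa) p = 0) (hpav : pev (pderiv 1 Fa) p = 0)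
    (hpbu : pev (pderiv 0 Fb) p = 0) (hpbv : pev (pderiv 1 Fb) p = 0) :
    (pencilOnLine Fa Fb p w).derivative.eval 1 = 0 := by
  rw [pencilOnLine, derivative_restrictToLineThrough, eval_restrictToLineThrough,
    pev_dirDeriv_pencilMemberThrough, one_smul, add_sub_cancel, pev_dirDeriv, pev_dirDeriv]
  simp [hpau, hpav, hpbu, hpbv]

end pencilOnLine

theorem manin_involution_preserves_quartic_pencil_general
    (Fa Fb : MvPolynomial (Fin 2) ℝ)
    (hFa : Fa.totalDegree ≤ 4) (hFb : Fb.totalDegree ≤ 4)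
    (p : ℝ × ℝ)
    (hpa : pev Fa p = 0)
    (hpau : pev (pderiv (0 : Fin 2) Fa) p = 0) (hpav : pev (pderiv (1 : Fin 2) Fa) p = 0)
    (hpb : pev Fb p = 0)
    (hpbu : pev (pderiv (0 : Fin 2) Fb) p = 0) (hpbv : pev (pderiv (1 : Fin 2) Fb) p = 0)
    (w : ℝ × ℝ) :
    pev Fa (manin Fa Fb 4 p w) * pev Fb w = pev Fa w * pev Fb (manin Fa Fb 4 p w) := by
  have hfactor := Polynomial.eq_X_mul_X_sub_one_sq_mul_of_natDegree_le_four
    (natDegree_pencilOnLine_le Fa Fb p w hFa hFb) (pencilOnLine_eval_zero Fa Fb p w)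
    (pencilOnLine_eval_one Fa Fb p w hpa hpb)
    (derivative_pencilOnLine_eval_one Fa Fb p w hpau hpav hpbu hpbv)
  have hroot := Polynomial.eval_eq_zero_of_eq_X_mul_X_sub_one_sq_mul hfactor
  rw [derivative_pencilOnLine_eval_zero, derivative_derivative_pencilOnLine_eval_zero,
    eval_pencilOnLine] at hroot
  have hmanin : manin Fa Fb 4 p w
      = w + (2 * G1 Fa Fb p w / (-4 * G1 Fa Fb p w - G2 Fa Fb p w)) • (p - w) := by
    rw [manin, den]
    norm_num
  rw [hmanin]
  linarith

/-- For a quartic pencil (total degrees ≤ 4) with a double base point `p`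
(both polynomials and their first partial derivatives vanish at `p`),
the generalised Manin involution with `D = 4` maps each curve of the pencil to
itself, wherever its defining denominator `−4G₁ − G₂` (which is `den Fa Fb 4 p w`)
is nonzero. -/
theorem manin_involution_preserves_quartic_pencil
    (Fa Fb : MvPolynomial (Fin 2) ℝ)
    (hFa : Fa.totalDegree ≤ 4) (hFb : Fb.totalDegree ≤ 4)
    (p : ℝ × ℝ)
    (hpa : pev Fa p = 0)
    (hpau : pev (pderiv (0 : Fin 2) Fa) p = 0) (hpav : pev (pderiv (1 : Fin 2) Fa) p = 0)
    (hpb : pev Fb p = 0)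
    (hpbu : pev (pderiv (0 : Fin 2) Fb) p = 0) (hpbv : pev (pderiv (1 : Fin 2) Fb) p = 0)
    (w : ℝ × ℝ) (hden : den Fa Fb 4 p w ≠ 0) :
    pev Fa (manin Fa Fb 4 p w) * pev Fb w = pev Fa w * pev Fb (manin Fa Fb 4 p w) :=
  manin_involution_preserves_quartic_pencil_general Fa Fb hFa hFb p hpa hpau hpav hpb hpbu hpbv w
end

section
/- Let D ≥ 2 be an integer and let F_a, F_b be real univariate polynomials of degree at most D satisfying F_a⁽ⁱ⁾(1) = 0 and F_b⁽ⁱ⁾(1) = 0 for all 0 ≤ i ≤ D−3 (where F⁽ⁱ⁾ is the i-th derivative; the condition is vacuous for D = 2). Set Gₙ = F_a(0)·F_b⁽ⁿ⁾(0) − F_a⁽ⁿ⁾(0)·F_b(0). If G_D ≠ 0, then the number z* = 2 − D·(1 + G_{D−1}/G_D) satisfies F_a(z*)·F_b(0) = F_b(z*)·F_a(0). -/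
open Polynomial

/-- `Gₙ = F_a(0)·F_b⁽ⁿ⁾(0) − F_a⁽ⁿ⁾(0)·F_b(0)`, where `F⁽ⁿ⁾` is the n-th derivative. -/
noncomputable def Gn (Fa Fb : Polynomial ℝ) (n : ℕ) : ℝ :=
  Fa.eval 0 * ((derivative)^[n] Fb).eval 0 - ((derivative)^[n] Fa).eval 0 * Fb.eval 0

/-- if `F_a, F_b` have degree at most `D ≥ 2`, all their derivatives of
order `i ≤ D − 3` vanish at `1`, and `G_D ≠ 0`, then
`z* = 2 − D(1 + G_{D−1}/G_D)` satisfies `F_a(z*)F_b(0) = F_b(z*)F_a(0)`. -/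
theorem manin_z_on_pencil
    (D : ℕ) (hD : 2 ≤ D) (Fa Fb : Polynomial ℝ)
    (hFa : Fa.natDegree ≤ D) (hFb : Fb.natDegree ≤ D)
    (hva : ∀ i : ℕ, i + 3 ≤ D → ((derivative)^[i] Fa).eval 1 = 0)
    (hvb : ∀ i : ℕ, i + 3 ≤ D → ((derivative)^[i] Fb).eval 1 = 0)
    (hG : Gn Fa Fb D ≠ 0) :
    Fa.eval (2 - (D : ℝ) * (1 + Gn Fa Fb (D - 1) / Gn Fa Fb D)) * Fb.eval 0 =
      Fb.eval (2 - (D : ℝ) * (1 + Gn Fa Fb (D - 1) / Gn Fa Fb D)) * Fa.eval 0 := by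
  obtain ⟨E, rfl⟩ : ∃ E, D = E + 2 := ⟨D - 2, by omega⟩
  set P : Polynomial ℝ := C (Fa.eval 0) * Fb - C (Fb.eval 0) * Fa with hP
  -- Gn in terms of coefficients of P
  have hGc : ∀ n : ℕ, Gn Fa Fb n = (n.factorial : ℝ) * P.coeff n := by
    intro n
    have h1 : (derivative^[n] P).eval 0 = Gn Fa Fb n := by
      simp only [hP, Polynomial.iterate_derivative_sub, Polynomial.iterate_derivative_C_mul,
        eval_sub, eval_mul, eval_C, Gn]
      ring
    have h2 : (derivative^[n] P).eval 0 = (n.factorial : ℝ) * P.coeff n := by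
      rw [← Polynomial.coeff_zero_eq_eval_zero, Polynomial.coeff_iterate_derivative]
      simp [Nat.descFactorial_self, nsmul_eq_mul]
    rw [← h1, h2]
  -- degree bound for P
  have hPdeg : P.natDegree < E + 3 := by
    have h1 : (C (Fa.eval 0) * Fb).natDegree ≤ E + 2 := (natDegree_C_mul_le _ _).trans hFb
    have h2 : (C (Fb.eval 0) * Fa).natDegree ≤ E + 2 := (natDegree_C_mul_le _ _).trans hFa
    have h3 : P.natDegree ≤ E + 2 := (natDegree_sub_le _ _).trans (max_le h1 h2)
    omega
  -- Taylor coefficients of P at 1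
  set Q : Polynomial ℝ := taylor 1 P with hQ
  have hQdeg : Q.natDegree < E + 3 := by rwa [hQ, natDegree_taylor]
  -- low-order Taylor coefficients vanish
  have hQzero : ∀ i : ℕ, i < E → Q.coeff i = 0 := by
    intro i hi
    have hder : (derivative^[i] P).eval 1 = 0 := by
      simp only [hP, Polynomial.iterate_derivative_sub, Polynomial.iterate_derivative_C_mul,
        eval_sub, eval_mul, eval_C, hva i (by omega), hvb i (by omega)]
      ring
    have hfac : (derivative^[i] P).eval 1 = (i.factorial : ℝ) * Q.coeff i := by
      rw [hQ, taylor_coeff, ← Polynomial.factorial_smul_hasseDeriv]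
      simp [nsmul_eq_mul]
    have hne : (i.factorial : ℝ) ≠ 0 := by positivity
    have h0 : (i.factorial : ℝ) * Q.coeff i = 0 := hfac ▸ hder
    rcases mul_eq_zero.mp h0 with h | h
    · exact absurd h hne
    · exact h
  set c0 : ℝ := Q.coeff E with hc0
  set c1 : ℝ := Q.coeff (E + 1) with hc1
  set c2 : ℝ := Q.coeff (E + 2) with hc2
  -- Taylor expansion: P = c0*(X-1)^E + c1*(X-1)^(E+1) + c2*(X-1)^(E+2)
  have hid : P = C c0 * (X + C (-1)) ^ E + C c1 * (X + C (-1)) ^ (E + 1)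
      + C c2 * (X + C (-1)) ^ (E + 2) := by
    have hsum := Polynomial.sum_taylor_eq P 1
    rw [← hQ] at hsum
    rw [Polynomial.sum_over_range' Q (by intro n; simp) (E + 3) hQdeg] at hsum
    rw [Finset.sum_range_succ, Finset.sum_range_succ, Finset.sum_range_succ] at hsum
    rw [Finset.sum_eq_zero (fun i hi => by
      rw [hQzero i (Finset.mem_range.mp hi)]; simp)] at hsum
    have hXC : (X - C (1 : ℝ)) = X + C (-1) := by
      rw [map_neg, sub_eq_add_neg]
    rw [hXC] at hsum
    rw [← hsum]; ring
  -- coefficients of P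
  have hPc2 : P.coeff (E + 2) = c2 := by
    rw [hid]
    simp only [coeff_add, coeff_C_mul, coeff_X_add_C_pow]
    rw [Nat.choose_eq_zero_of_lt (by omega), Nat.choose_eq_zero_of_lt (by omega),
      Nat.choose_self, Nat.sub_self]
    push_cast; ring
  have hPc1 : P.coeff (E + 1) = c1 - (E + 2) * c2 := by
    rw [hid]
    simp only [coeff_add, coeff_C_mul, coeff_X_add_C_pow]
    rw [Nat.choose_eq_zero_of_lt (by omega), Nat.choose_self,
      Nat.choose_succ_self_right, Nat.sub_self]
    have h1 : E + 2 - (E + 1) = 1 := by omega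
    rw [h1]
    push_cast; ring
  -- P(0) = 0 gives the relation on c0
  have hP0 : P.eval 0 = 0 := by simp [hP]; ring
  have hrel : c0 = c1 - c2 := by
    have := hP0
    rw [hid] at this
    simp only [eval_add, eval_mul, eval_pow, eval_X, eval_C, zero_add] at this
    have hm : (-1 : ℝ) ^ (E + 1) = -(-1) ^ E := by rw [pow_succ]; ring
    have hm2 : (-1 : ℝ) ^ (E + 2) = (-1) ^ E := by rw [pow_succ, pow_succ]; ring
    rw [hm, hm2] at this
    have hne : ((-1 : ℝ) ^ E) ≠ 0 := by positivity
    have : (-1 : ℝ) ^ E * (c0 - c1 + c2) = 0 := by linarith [this]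
    rcases mul_eq_zero.mp this with h | h
    · exact absurd h hne
    · linarith
  -- Gn values
  have hGD : Gn Fa Fb (E + 2) = ((E + 2).factorial : ℝ) * c2 := by rw [hGc, hPc2]
  have hGD1 : Gn Fa Fb (E + 1) = ((E + 1).factorial : ℝ) * (c1 - (E + 2) * c2) := by
    rw [hGc, hPc1]
  have hc2ne : c2 ≠ 0 := by
    intro h
    apply hG
    rw [hGD, h, mul_zero]
  -- the point z*
  set z : ℝ := 2 - ((E + 2 : ℕ) : ℝ) * (1 + Gn Fa Fb (E + 2 - 1) / Gn Fa Fb (E + 2)) with hz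
  have hsub : (E + 2 - 1 : ℕ) = E + 1 := by omega
  have hfacne : ((E + 1).factorial : ℝ) ≠ 0 := by positivity
  have hEne : ((E : ℝ) + 2) ≠ 0 := by positivity
  have hfac2 : ((E + 2).factorial : ℝ) = ((E : ℝ) + 2) * ((E + 1).factorial : ℝ) := by
    rw [Nat.factorial_succ]; push_cast; ring
  have hzt : z - 1 = 1 - c1 / c2 := by
    rw [hz, hsub, hGD, hGD1, hfac2]
    push_cast
    field_simp
    ring
  -- evaluate P at z
  have hPz : P.eval z = 0 := by
    rw [hid]
    simp only [eval_add, eval_mul, eval_pow, eval_X, eval_C]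
    have he : z + (-1) = z - 1 := by ring
    rw [he, hzt, hrel]
    have : (1 - c1 / c2) ^ (E + 1) = (1 - c1 / c2) ^ E * (1 - c1 / c2) := by
      rw [pow_succ]
    rw [this]
    have : (1 - c1 / c2) ^ (E + 2) = (1 - c1 / c2) ^ E * (1 - c1 / c2) ^ 2 := by
      rw [pow_add]
    rw [this]
    have hkey : (c1 - c2) + c1 * (1 - c1 / c2) + c2 * (1 - c1 / c2) ^ 2 = 0 := by
      field_simp
      ring
    linear_combination (1 - c1 / c2) ^ E * hkey
  -- conclude
  have hPz' : Fa.eval 0 * Fb.eval z - Fb.eval 0 * Fa.eval z = 0 := by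
    have := hPz
    simp only [hP, eval_sub, eval_mul, eval_C] at this
    linarith
  rw [← hz] at *
  linarith [hPz']
end

section
/- Let D ≥ 2 be an integer and let F be a real univariate polynomial of degree at most D satisfying F⁽ⁱ⁾(1) = 0 for all 0 ≤ i ≤ D−3 (vacuous for D = 2). Then, as an identity of polynomials in z, D!·F(z) = (z−1)^{D−2}·( F⁽ᴰ⁾(0)·z² + (D·F⁽ᴰ⁻¹⁾(0) + (D−2)·F⁽ᴰ⁾(0))·z + (−1)^D·D!·F(0) ). -/
open Polynomial

lemma coeff_X_sub_one_pow_pred (m : ℕ) :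
    ((X - 1 : Polynomial ℝ) ^ (m + 1)).coeff m = -(m + 1 : ℝ) := by
  induction m with
  | zero => simp
  | succ m ih =>
    have hmonic : ((X : Polynomial ℝ) - 1).Monic := by
      simpa using monic_X_sub_C (1 : ℝ)
    have hlead : ((X - 1 : Polynomial ℝ) ^ (m + 1)).coeff (m + 1) = 1 := by
      have := (hmonic.pow (m + 1)).coeff_natDegree
      have hd : ((X:Polynomial ℝ) - 1).natDegree = 1 := by simpa using natDegree_X_sub_C (1:ℝ)
      rwa [hmonic.natDegree_pow, hd, mul_one] at this
    have : ((X - 1 : Polynomial ℝ) ^ (m + 2)) = ((X - 1) ^ (m + 1)) * X - ((X - 1) ^ (m + 1)) := by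
      ring
    rw [this, coeff_sub, coeff_mul_X, ih, hlead]
    push_cast; ring

lemma eval_zero_iterate_derivative (p : Polynomial ℝ) (k : ℕ) :
    ((derivative)^[k] p).eval 0 = (k.factorial : ℝ) * p.coeff k := by
  rw [← coeff_zero_eq_eval_zero, coeff_iterate_derivative]
  simp [Nat.descFactorial_self, nsmul_eq_mul]

/-- the factorised form of a degree-`D` polynomial all of whose
derivatives of order `i ≤ D − 3` vanish at `1`:
`D!·F(z) = (z−1)^{D−2}(F⁽ᴰ⁾(0)z² + (D·F⁽ᴰ⁻¹⁾(0) + (D−2)F⁽ᴰ⁾(0))z + (−1)^D D! F(0))`. -/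
theorem factorised_form
    (D : ℕ) (hD : 2 ≤ D) (F : Polynomial ℝ) (hF : F.natDegree ≤ D)
    (hv : ∀ i : ℕ, i + 3 ≤ D → ((derivative)^[i] F).eval 1 = 0) :
    C (D.factorial : ℝ) * F =
      (X - 1) ^ (D - 2) *
        (C (((derivative)^[D] F).eval 0) * X ^ 2
          + C ((D : ℝ) * ((derivative)^[D - 1] F).eval 0
              + ((D : ℝ) - 2) * ((derivative)^[D] F).eval 0) * X
          + C ((-1 : ℝ) ^ D * (D.factorial : ℝ) * F.eval 0)) := by
  rcases eq_or_ne F 0 with rfl | h0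
  · simp
  set P : Polynomial ℝ := (X - 1) ^ (D - 2) with hP
  have hmonic : ((X : Polynomial ℝ) - 1).Monic := by simpa using monic_X_sub_C (1 : ℝ)
  have hPmonic : P.Monic := hmonic.pow _
  have hPdeg : P.natDegree = D - 2 := by
    rw [hP, hmonic.natDegree_pow]
    simp [show ((X : Polynomial ℝ) - 1).natDegree = 1 by simpa using natDegree_X_sub_C (1 : ℝ)]
  obtain ⟨Q, hQ⟩ : P ∣ F := by
    rcases eq_or_lt_of_le hD with rfl | hD3
    · simp [hP]
    · have hlt : D - 3 < F.rootMultiplicity 1 := by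
        rw [lt_rootMultiplicity_iff_isRoot_iterate_derivative h0]
        intro m hm
        exact hv m (by omega)
      have h1 : P ∣ (X - C 1) ^ F.rootMultiplicity 1 := by
        rw [hP]
        simpa using pow_dvd_pow (X - 1 : Polynomial ℝ) (by omega : D - 2 ≤ F.rootMultiplicity 1)
      exact h1.trans (F.pow_rootMultiplicity_dvd 1)
  have hQ0 : Q ≠ 0 := by rintro rfl; simp [hQ] at h0
  have hQdeg : Q.natDegree ≤ 2 := by
    have := natDegree_mul (hPmonic.ne_zero) hQ0
    rw [← hQ, hPdeg] at this
    omega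
  set a := Q.coeff 2 with ha
  set b := Q.coeff 1 with hb
  set c := Q.coeff 0 with hc
  have hQ2 : Q = C a * X ^ 2 + C b * X ^ 1 + C c * X ^ 0 := by
    ext n
    rcases n with _ | _ | _ | n
    · simp [hc]
    · simp [hb]
    · simp [ha]
    · rw [coeff_eq_zero_of_natDegree_lt (by omega : Q.natDegree < n + 3)]
      simp [coeff_X_pow]
  have hcoe : ∀ n : ℕ, F.coeff n =
      a * (if 2 ≤ n then P.coeff (n - 2) else 0)
      + b * (if 1 ≤ n then P.coeff (n - 1) else 0)
      + c * P.coeff n := by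
    intro n
    have : F = C a * (P * X ^ 2) + C b * (P * X ^ 1) + C c * (P * X ^ 0) := by
      rw [hQ, hQ2]; ring
    rw [this]
    simp only [coeff_add, coeff_C_mul, coeff_mul_X_pow', Nat.sub_zero, Nat.zero_le, if_true]
  have h1 : F.coeff D = a := by
    rw [hcoe D, if_pos (by omega), if_pos (by omega),
      coeff_eq_zero_of_natDegree_lt (by omega : P.natDegree < D - 1),
      coeff_eq_zero_of_natDegree_lt (by omega : P.natDegree < D)]
    have : P.coeff (D - 2) = 1 := by
      have := hPmonic.coeff_natDegree
      rwa [hPdeg] at this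
    rw [this]; ring
  have e1 : ((derivative)^[D] F).eval 0 = (D.factorial : ℝ) * a := by
    rw [eval_zero_iterate_derivative, h1]
  have e3 : (-1 : ℝ) ^ D * (D.factorial : ℝ) * F.eval 0 = (D.factorial : ℝ) * c := by
    have hev : F.eval 0 = (-1 : ℝ) ^ (D - 2) * c := by
      rw [hQ, eval_mul, hP, eval_pow]
      simp [← coeff_zero_eq_eval_zero, hc]
    have hsign : (-1 : ℝ) ^ D * (-1) ^ (D - 2) = 1 := by
      rw [← pow_add, show D + (D - 2) = 2 * (D - 1) by omega, pow_mul]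
      norm_num
    rw [hev]
    linear_combination (D.factorial : ℝ) * c * hsign
  have hfac : (D : ℝ) * ((D - 1).factorial : ℝ) = (D.factorial : ℝ) := by
    rw [← Nat.cast_mul, Nat.mul_factorial_pred (by omega)]
  have e2 : (D : ℝ) * ((derivative)^[D - 1] F).eval 0
      + ((D : ℝ) - 2) * ((derivative)^[D] F).eval 0 = (D.factorial : ℝ) * b := by
    rw [e1, eval_zero_iterate_derivative]
    rcases eq_or_lt_of_le hD with rfl | hD3
    · have : F.coeff 1 = b := by
        rw [hcoe 1, if_neg (by omega), if_pos le_rfl]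
        have hP1 : P = 1 := by simp [hP]
        rw [hP1]
        simp [coeff_one]
      rw [this]
      norm_num [Nat.factorial]
    · have hc3 : P.coeff (D - 3) = -(((D : ℝ)) - 2) := by
        have := coeff_X_sub_one_pow_pred (D - 3)
        rw [hP, show D - 2 = (D - 3) + 1 by omega]
        rw [this]
        have : ((D - 3 : ℕ) : ℝ) = (D : ℝ) - 3 := by
          have : (3 : ℕ) ≤ D := by omega
          push_cast [Nat.cast_sub this]
          ring
        rw [this]; ring
      have h2 : F.coeff (D - 1) = b - ((D : ℝ) - 2) * a := by
        rw [hcoe (D - 1), if_pos (by omega), if_pos (by omega),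
          show D - 1 - 2 = D - 3 by omega, show D - 1 - 1 = D - 2 by omega,
          coeff_eq_zero_of_natDegree_lt (by omega : P.natDegree < D - 1), hc3]
        have : P.coeff (D - 2) = 1 := by
          have := hPmonic.coeff_natDegree
          rwa [hPdeg] at this
        rw [this]; ring
      rw [h2]
      linear_combination (b - ((D : ℝ) - 2) * a) * hfac
  rw [e2, e1, e3, hQ, hQ2]
  simp only [C_mul]
  ring
end

section
/- Let D ≥ 2 be an integer and let F be a real univariate polynomial of degree at most D satisfying F⁽ⁱ⁾(1) = 0 for all 0 ≤ i ≤ D−3 (vacuous for D = 2). Then (1/2)·(D−1)(D−2)·F⁽ᴰ⁾(0) + D(D−2)·F⁽ᴰ⁻¹⁾(0) + D(D−1)·F⁽ᴰ⁻²⁾(0) = (−1)^D·D!·F(0). -/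
open Polynomial

lemma evalYpow (m k : ℕ) : ((derivative^[k] ((X + C (-1:ℝ))^m)).eval 0) = (m.descFactorial k : ℝ) * (-1)^(m-k) := by
  rw [iterate_derivative_X_add_pow]
  simp [mul_comm]

/-- for a degree-`≤ D` polynomial all of whose derivatives of order
`i ≤ D − 3` vanish at `1`:
`½(D−1)(D−2)F⁽ᴰ⁾(0) + D(D−2)F⁽ᴰ⁻¹⁾(0) + D(D−1)F⁽ᴰ⁻²⁾(0) = (−1)^D D! F(0)`. -/
theorem derivative_linear_relation
    (D : ℕ) (hD : 2 ≤ D) (F : Polynomial ℝ) (hF : F.natDegree ≤ D)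
    (hv : ∀ i : ℕ, i + 3 ≤ D → ((derivative)^[i] F).eval 1 = 0) :
    (1 / 2 : ℝ) * ((D : ℝ) - 1) * ((D : ℝ) - 2) * ((derivative)^[D] F).eval 0
      + (D : ℝ) * ((D : ℝ) - 2) * ((derivative)^[D - 1] F).eval 0
      + (D : ℝ) * ((D : ℝ) - 1) * ((derivative)^[D - 2] F).eval 0
      = (-1 : ℝ) ^ D * (D.factorial : ℝ) * F.eval 0 := by
  obtain ⟨m, rfl⟩ : ∃ m, D = m + 2 := ⟨D - 2, by omega⟩
  by_cases hF0 : F = 0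
  · simp [hF0]
  -- divisibility
  have hdvd : (X - C (1:ℝ))^m ∣ F := by
    rcases Nat.eq_zero_or_pos m with rfl | hm
    · simp
    have h1 : m - 1 < F.rootMultiplicity 1 := by
      apply lt_rootMultiplicity_of_isRoot_iterate_derivative hF0
      intro k hk
      exact hv k (by omega)
    calc (X - C (1:ℝ))^m ∣ (X - C 1)^(F.rootMultiplicity 1) := pow_dvd_pow _ (by omega)
      _ ∣ F := F.pow_rootMultiplicity_dvd 1
  obtain ⟨Q, hQ⟩ := hdvd
  have hQ0 : Q ≠ 0 := by rintro rfl; simp [hQ] at hF0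
  have hmon : ((X - C (1:ℝ))^m).Monic := (monic_X_sub_C 1).pow m
  have hdeg : Q.natDegree ≤ 2 := by
    have := hmon.natDegree_mul' (q := Q) hQ0
    rw [← hQ] at this
    rw [natDegree_pow, natDegree_X_sub_C, mul_one] at this
    omega
  have hQ3 : Q = C (Q.coeff 0) + C (Q.coeff 1) * X + C (Q.coeff 2) * X^2 := by
    have h := Q.as_sum_range' 3 (by omega)
    rw [h]
    simp [Finset.sum_range_succ, ← C_mul_X_pow_eq_monomial]
  set a := Q.coeff 0; set b := Q.coeff 1; set c := Q.coeff 2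
  have hF2 : F = C (a+b+c) * (X + C (-1:ℝ))^m + C (b+2*c) * (X + C (-1))^(m+1)
      + C c * (X + C (-1))^(m+2) := by
    rw [hQ, hQ3]
    simp only [map_neg, map_one, map_add, map_mul, map_ofNat, pow_succ]
    ring
  set A := a + b + c with hA
  set B := b + 2*c with hB
  have key : ∀ k : ℕ, ((derivative^[k] F).eval 0) =
      A * ((m.descFactorial k : ℝ) * (-1)^(m-k))
      + B * (((m+1).descFactorial k : ℝ) * (-1)^(m+1-k))
      + c * (((m+2).descFactorial k : ℝ) * (-1)^(m+2-k)) := by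
    intro k
    rw [hF2]
    simp only [iterate_map_add, iterate_derivative_C_mul, eval_add, eval_mul, eval_C, evalYpow]
  -- descFactorial facts
  have d1 : Nat.descFactorial (m+1) m = Nat.factorial (m+1) := by
    have := Nat.descFactorial_self (m+1)
    rwa [show m+1 = m+1 from rfl, Nat.descFactorial_succ, Nat.add_sub_cancel_left, one_mul] at this
  have d2 : Nat.descFactorial (m+2) (m+1) = Nat.factorial (m+2) := by
    have := Nat.descFactorial_self (m+2)
    rwa [show m+2 = (m+1)+1 from rfl, Nat.descFactorial_succ,
      show m+2 - (m+1) = 1 by omega, one_mul] at this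
  have d3 : 2 * Nat.descFactorial (m+2) m = Nat.factorial (m+2) := by
    rw [← d2, Nat.descFactorial_succ, show m+2-m = 2 by omega]
  have dz1 : Nat.descFactorial m (m+2) = 0 := Nat.descFactorial_eq_zero_iff_lt.2 (by omega)
  have dz2 : Nat.descFactorial (m+1) (m+2) = 0 := Nat.descFactorial_eq_zero_iff_lt.2 (by omega)
  have dz3 : Nat.descFactorial m (m+1) = 0 := Nat.descFactorial_eq_zero_iff_lt.2 (by omega)
  have k0 := key 0
  have k1 := key m
  have k2 := key (m+1)
  have k3 := key (m+2)
  simp only [Nat.descFactorial_zero, Nat.descFactorial_self, dz1, dz2, dz3, d1, d2,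
    Nat.sub_self, Nat.add_sub_cancel_left, show m+1-m = 1 by omega, show m+2-m = 2 by omega,
    show m+2-(m+1) = 1 by omega, show m+1-(m+1) = 0 by omega, show m+2-(m+2) = 0 by omega,
    Nat.cast_zero, Nat.cast_one, pow_zero, pow_one, Nat.sub_zero] at k0 k1 k2 k3
  have e0 : F.eval 0 = (derivative^[0] F).eval 0 := by simp
  rw [show m+2-1 = m+1 by omega, show m+2-2 = m by omega, e0, k0, k1, k2, k3]
  have hd3 : (Nat.descFactorial (m+2) m : ℝ) = (Nat.factorial (m+2) : ℝ) / 2 := by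
    have h := congrArg (Nat.cast : ℕ → ℝ) d3
    push_cast at h
    linarith
  have hfac2 : (Nat.factorial (m+2) : ℝ) = (m+2) * (m+1) * Nat.factorial m := by
    push_cast [Nat.factorial_succ]; ring
  have hfac1 : (Nat.factorial (m+1) : ℝ) = (m+1) * Nat.factorial m := by
    push_cast [Nat.factorial_succ]; ring
  have hs : (-1:ℝ)^m * (-1)^m = 1 := by
    rw [← pow_add, ← two_mul, pow_mul]; norm_num
  rw [hd3, hfac2, hfac1]
  push_cast [pow_succ]
  linear_combination (-1) * ((m:ℝ)+2) * ((m:ℝ)+1) * (Nat.factorial m : ℝ) * a * hs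
end

section
/- Let D ≥ 2 be an integer and let F_a, F_b be real univariate polynomials of degree at most D satisfying F_a⁽ⁱ⁾(1) = 0 and F_b⁽ⁱ⁾(1) = 0 for all 0 ≤ i ≤ D−3 (vacuous for D = 2). Set Gₙ = F_a(0)·F_b⁽ⁿ⁾(0) − F_a⁽ⁿ⁾(0)·F_b(0). Then for every integer k with 0 ≤ k ≤ D, G_k = (−1)^k · (k!/2) · ( C(D−2, k−2)·G₂ + 2·(k−2)·C(D−1, k−1)·G₁ ), where C(n,m) denotes the binomial coefficient (taken to be 0 when m < 0). -/
open Polynomial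

/-- The binomial coefficient `C(n, m)` for an integer lower index, taken to be `0`
when `m < 0`. -/
def chooseZ (n : ℕ) (m : ℤ) : ℕ :=
  if m < 0 then 0 else n.choose m.toNat

lemma eval0_iterate_deriv (P : Polynomial ℝ) (n : ℕ) :
    ((derivative)^[n] P).eval 0 = (n.factorial : ℝ) * P.coeff n := by
  rw [← coeff_zero_eq_eval_zero, Polynomial.coeff_iterate_derivative]
  simp [Nat.descFactorial_self, nsmul_eq_mul]

lemma Gn_eq (Fa Fb : Polynomial ℝ) (n : ℕ) :
    Gn Fa Fb n = (n.factorial : ℝ) *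
      (Fa.coeff 0 * Fb.coeff n - Fa.coeff n * Fb.coeff 0) := by
  unfold Gn
  rw [eval0_iterate_deriv, eval0_iterate_deriv, ← coeff_zero_eq_eval_zero,
    ← coeff_zero_eq_eval_zero]
  ring

lemma cval (D : ℕ) (hD : 2 ≤ D) (m : ℕ) :
    (((X : Polynomial ℝ) - 1) ^ (D - 2)).coeff m
      = (-1 : ℝ) ^ D * (-1) ^ m * ((D - 2).choose m : ℝ) := by
  have h1 : ((X : Polynomial ℝ) - 1) = X + C (-1) := by
    rw [map_neg, C_1]; ring
  rw [h1, coeff_X_add_C_pow]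
  rcases le_or_gt m (D - 2) with h | h
  · have h2 : (-1 : ℝ) ^ (D - 2 - m) = (-1) ^ D * (-1) ^ m := by
      rw [← pow_add]
      rw [show D + m = (D - 2 - m) + 2 * (m + 1) from by omega, pow_add, pow_mul]
      norm_num
    rw [h2]
  · rw [Nat.choose_eq_zero_of_lt h]
    simp

lemma structure_lem (D : ℕ) (hD : 2 ≤ D) (F : Polynomial ℝ) (hF : F.natDegree ≤ D)
    (hv : ∀ i : ℕ, i + 3 ≤ D → ((derivative)^[i] F).eval 1 = 0) :
    ∃ Q : Polynomial ℝ, Q.natDegree ≤ 2 ∧ F = ((X : Polynomial ℝ) - 1) ^ (D - 2) * Q := by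
  rcases eq_or_ne F 0 with rfl | hF0
  · exact ⟨0, by simp, by simp⟩
  have hdvd : ((X : Polynomial ℝ) - 1) ^ (D - 2) ∣ F := by
    rcases Nat.lt_or_ge D 3 with h3 | h3
    · have hD2 : D - 2 = 0 := by omega
      rw [hD2, pow_zero]
      exact one_dvd _
    · have hlt : D - 3 < F.rootMultiplicity 1 := by
        apply Polynomial.lt_rootMultiplicity_of_isRoot_iterate_derivative_of_mem_nonZeroDivisors hF0
        · intro m hm
          exact hv m (by omega)
        · exact mem_nonZeroDivisors_of_ne_zero
            (Nat.cast_ne_zero.mpr (Nat.factorial_ne_zero _))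
      have h1 : ((X : Polynomial ℝ) - C 1) ^ (F.rootMultiplicity 1) ∣ F :=
        F.pow_rootMultiplicity_dvd 1
      rw [C_1] at h1
      exact dvd_trans (pow_dvd_pow _ (by omega)) h1
  obtain ⟨Q, hQ⟩ := hdvd
  refine ⟨Q, ?_, hQ⟩
  have hQ0 : Q ≠ 0 := by
    rintro rfl
    simp at hQ
    exact hF0 hQ
  have hP0 : ((X : Polynomial ℝ) - 1) ^ (D - 2) ≠ 0 := by
    rw [show ((X : Polynomial ℝ) - 1) = X - C 1 by rw [C_1]]
    exact pow_ne_zero _ (X_sub_C_ne_zero 1)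
  have hdeg : F.natDegree = (D - 2) + Q.natDegree := by
    rw [hQ, natDegree_mul hP0 hQ0]
    congr 1
    rw [show ((X : Polynomial ℝ) - 1) = X - C 1 by rw [C_1], natDegree_pow, natDegree_X_sub_C]
    ring
  omega

lemma coeff_formula (D : ℕ) (hD : 2 ≤ D) (F : Polynomial ℝ) (hF : F.natDegree ≤ D)
    (hv : ∀ i : ℕ, i + 3 ≤ D → ((derivative)^[i] F).eval 1 = 0) :
    ∃ q0 q1 q2 : ℝ, ∀ k : ℕ,
      F.coeff k =
        q0 * ((-1 : ℝ) ^ D * (-1) ^ k * ((D - 2).choose k : ℝ))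
        + q1 * (if 1 ≤ k then (-1 : ℝ) ^ D * (-1) ^ (k - 1) * ((D - 2).choose (k - 1) : ℝ) else 0)
        + q2 * (if 2 ≤ k then (-1 : ℝ) ^ D * (-1) ^ (k - 2) * ((D - 2).choose (k - 2) : ℝ) else 0) := by
  obtain ⟨Q, hQdeg, hQ⟩ := structure_lem D hD F hF hv
  refine ⟨Q.coeff 0, Q.coeff 1, Q.coeff 2, fun k => ?_⟩
  have hQ3 : Q.natDegree < 3 := by omega
  have hQex : Q = C (Q.coeff 0) + C (Q.coeff 1) * X ^ 1 + C (Q.coeff 2) * X ^ 2 := by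
    conv_lhs => rw [Q.as_sum_range' 3 hQ3]
    rw [Finset.sum_range_succ, Finset.sum_range_succ, Finset.sum_range_one]
    simp [← C_mul_X_pow_eq_monomial]
  have hF' : F = (((X : Polynomial ℝ) - 1) ^ (D - 2)) * C (Q.coeff 0)
      + ((((X : Polynomial ℝ) - 1) ^ (D - 2)) * C (Q.coeff 1)) * X ^ 1
      + ((((X : Polynomial ℝ) - 1) ^ (D - 2)) * C (Q.coeff 2)) * X ^ 2 := by
    rw [hQ]; conv_lhs => rw [hQex]
    ring
  rw [hF', coeff_add, coeff_add, coeff_mul_C, coeff_mul_X_pow', coeff_mul_X_pow',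
    cval D hD k]
  split_ifs with h1 h2
  · rw [coeff_mul_C, coeff_mul_C, cval D hD, cval D hD]
    ring
  · rw [coeff_mul_C, cval D hD]
    ring
  · omega
  · ring

lemma bin_nat (n m : ℕ) :
    n * n.choose m = n.choose (m + 1) + m * ((n + 1).choose (m + 1)) := by
  have h2 := Nat.choose_succ_right_eq n m
  have h3 : (n + 1).choose (m + 1) = n.choose m + n.choose (m + 1) :=
    Nat.choose_succ_succ _ _
  rcases le_or_gt m n with h | h
  · zify [h] at h2 ⊢
    rw [h3]
    push_cast
    linear_combination (-1 : ℤ) * h2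
  · rw [Nat.choose_eq_zero_of_lt h, Nat.choose_eq_zero_of_lt (by omega), h3,
      Nat.choose_eq_zero_of_lt h, Nat.choose_eq_zero_of_lt (by omega)]
    ring

/-- for polynomials of degree at most `D ≥ 2` all of whose derivatives
of order `i ≤ D − 3` vanish at `1`, for every `0 ≤ k ≤ D`:
`G_k = (−1)^k (k!/2)(C(D−2,k−2)G₂ + 2(k−2)C(D−1,k−1)G₁)`. -/
theorem Gk_in_terms_of_G1_G2
    (D : ℕ) (hD : 2 ≤ D) (Fa Fb : Polynomial ℝ)
    (hFa : Fa.natDegree ≤ D) (hFb : Fb.natDegree ≤ D)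
    (hva : ∀ i : ℕ, i + 3 ≤ D → ((derivative)^[i] Fa).eval 1 = 0)
    (hvb : ∀ i : ℕ, i + 3 ≤ D → ((derivative)^[i] Fb).eval 1 = 0) :
    ∀ k : ℕ, k ≤ D →
      Gn Fa Fb k =
        (-1 : ℝ) ^ k * ((k.factorial : ℝ) / 2) *
          ((chooseZ (D - 2) ((k : ℤ) - 2) : ℝ) * Gn Fa Fb 2
            + 2 * ((k : ℝ) - 2) * (chooseZ (D - 1) ((k : ℤ) - 1) : ℝ) * Gn Fa Fb 1) := by
  intro k hk
  rcases Nat.lt_or_ge k 2 with hk2 | hk2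
  · interval_cases k
    · norm_num [chooseZ, Gn]
    · norm_num [chooseZ]
      ring
  · obtain ⟨j, rfl⟩ : ∃ j, k = j + 2 := ⟨k - 2, by omega⟩
    obtain ⟨a0, a1, a2, ha⟩ := coeff_formula D hD Fa hFa hva
    obtain ⟨b0, b1, b2, hb⟩ := coeff_formula D hD Fb hFb hvb
    have hs : (-1 : ℝ) ^ D * (-1 : ℝ) ^ D = 1 := by
      rw [← pow_add, ← two_mul, pow_mul]; norm_num
    -- clean instances of the coefficient formulas
    have ha0 := ha 0; have hb0 := hb 0
    have ha1 := ha 1; have hb1 := hb 1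
    have ha2 := ha 2; have hb2 := hb 2
    have haK := ha (j + 2); have hbK := hb (j + 2)
    norm_num at ha0 hb0 ha1 hb1 ha2 hb2
    rw [if_pos (by omega : (1:ℕ) ≤ j + 2), if_pos (by omega : (2:ℕ) ≤ j + 2),
      show j + 2 - 1 = j + 1 from by omega, show j + 2 - 2 = j from by omega] at haK hbK
    -- Gn values
    have hG1 : Gn Fa Fb 1 = a0 * b1 - a1 * b0 := by
      rw [Gn_eq, ha0, ha1, hb0, hb1]
      norm_num
      linear_combination (a0 * b1 - a1 * b0) * hs
    have hG2 : Gn Fa Fb 2 = 2 * ((a0 * b2 - a2 * b0)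
        - ((D - 2 : ℕ) : ℝ) * (a0 * b1 - a1 * b0)) := by
      rw [Gn_eq, ha0, ha2, hb0, hb2]
      norm_num
      linear_combination ((a0 * b2 - a2 * b0)
        - ((D - 2 : ℕ) : ℝ) * (a0 * b1 - a1 * b0)) * hs
    have hGK : Gn Fa Fb (j + 2) = ((j + 2).factorial : ℝ) * (-1) ^ j *
        (((D - 2).choose j : ℝ) * (a0 * b2 - a2 * b0)
          - ((D - 2).choose (j + 1) : ℝ) * (a0 * b1 - a1 * b0)) := by
      rw [Gn_eq, ha0, haK, hb0, hbK]
      linear_combination (((j + 2).factorial : ℝ) * (-1) ^ j *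
        (((D - 2).choose j : ℝ) * (a0 * b2 - a2 * b0)
          - ((D - 2).choose (j + 1) : ℝ) * (a0 * b1 - a1 * b0))) * hs
    -- chooseZ values
    have hc2 : (chooseZ (D - 2) (((j + 2 : ℕ) : ℤ) - 2) : ℝ) = ((D - 2).choose j : ℝ) := by
      have h : (((j + 2 : ℕ) : ℤ) - 2) = (j : ℤ) := by push_cast; ring
      rw [h]; unfold chooseZ
      rw [if_neg (by omega)]
      simp
    have hc1 : (chooseZ (D - 1) (((j + 2 : ℕ) : ℤ) - 1) : ℝ) = ((D - 1).choose (j + 1) : ℝ) := by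
      have h : (((j + 2 : ℕ) : ℤ) - 1) = ((j + 1 : ℕ) : ℤ) := by push_cast; ring
      rw [h]; unfold chooseZ
      rw [if_neg (by omega)]
      simp
    -- the binomial identity, cast to ℝ
    have hbinR : ((D - 2 : ℕ) : ℝ) * ((D - 2).choose j : ℝ)
        = ((D - 2).choose (j + 1) : ℝ) + (j : ℝ) * ((D - 1).choose (j + 1) : ℝ) := by
      have h2 := bin_nat (D - 2) j
      have h3 : D - 2 + 1 = D - 1 := by omega
      rw [h3] at h2
      exact_mod_cast h2
    rw [hGK, hG1, hG2, hc2, hc1]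
    push_cast
    linear_combination ((j + 2).factorial : ℝ) * (-1 : ℝ) ^ j * (a0 * b1 - a1 * b0) * hbinR
end

section
/- Let F_a and F_b be real polynomials of total degree at most 2 in two variables, and let p, q, r be three collinear points of ℝ². Let ι_p, ι_q, ι_r be the generalised Manin involutions with degree parameter D = 2 and involution points p, q, r, and let φ = ι_r ∘ ι_q ∘ ι_p. Then φ is an involution: for every (u,v) ∈ ℝ² such that every one of the six successive applications of ι_p, ι_q, ι_r occurring in φ(φ(u,v)) has nonzero defining denominator at the point where it is applied, one has φ(φ(u,v)) = (u,v). In particular, ι_r is a reversing symmetry of τ = ι_q ∘ ι_p for every r on the line through p and q. -/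
open MvPolynomial

lemma mem_six (m : Fin 2 →₀ ℕ) (h : m 0 + m 1 ≤ 2) :
    m ∈ ({0, Finsupp.single 0 1, Finsupp.single 1 1, Finsupp.single 0 2,
      Finsupp.single 0 1 + Finsupp.single 1 1, Finsupp.single 1 2} :
      Finset (Fin 2 →₀ ℕ)) := by
  have hm : m = Finsupp.single 0 (m 0) + Finsupp.single 1 (m 1) := by
    ext i; fin_cases i <;> simp [Finsupp.single_apply]
  have h0 : m 0 ≤ 2 := le_trans (Nat.le_add_right _ _) h
  interval_cases hh0 : m 0 <;>
    · have h1 : m 1 ≤ 2 := by omega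
      interval_cases hh1 : m 1 <;>
        simp_all [Finset.mem_insert, Finsupp.single_zero]

private lemma fne {i : Fin 2} {a b : Fin 2 →₀ ℕ} (h : a i ≠ b i) : a ≠ b :=
  fun hab => h (by rw [hab])

lemma quad_structure (F : MvPolynomial (Fin 2) ℝ) (hF : F.totalDegree ≤ 2) :
    ∃ c0 c1 c2 c3 c4 c5 : ℝ,
      F = C c0 + C c1 * X 0 + C c2 * X 1 + C c3 * X 0 ^ 2 + C c4 * (X 0 * X 1)
        + C c5 * X 1 ^ 2 := by
  classical
  set e1 : Fin 2 →₀ ℕ := Finsupp.single 0 1 with he1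
  set e2 : Fin 2 →₀ ℕ := Finsupp.single 1 1 with he2
  set e3 : Fin 2 →₀ ℕ := Finsupp.single 0 2 with he3
  set e4 : Fin 2 →₀ ℕ := Finsupp.single 0 1 + Finsupp.single 1 1 with he4
  set e5 : Fin 2 →₀ ℕ := Finsupp.single 1 2 with he5
  have hsub : F.support ⊆ ({0, e1, e2, e3, e4, e5} : Finset (Fin 2 →₀ ℕ)) := by
    intro m hm
    have hd : (m.sum fun _ e => e) ≤ F.totalDegree := le_totalDegree hm
    have hsum : (m.sum fun _ e => e) = m 0 + m 1 := by
      rw [Finsupp.sum_fintype] <;> simp [Fin.sum_univ_two]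
    exact mem_six m (by omega)
  have hFsum : F = ∑ m ∈ ({0, e1, e2, e3, e4, e5} : Finset (Fin 2 →₀ ℕ)),
      monomial m (coeff m F) := by
    conv_lhs => rw [← support_sum_monomial_coeff F]
    exact Finset.sum_subset hsub (fun m _ hm => by
      simp [notMem_support_iff.mp hm])
  refine ⟨coeff 0 F, coeff e1 F, coeff e2 F, coeff e3 F, coeff e4 F, coeff e5 F, ?_⟩
  have n01 : (0 : Fin 2 →₀ ℕ) ≠ e1 := fne (i := 0) (by simp [he1])
  have n02 : (0 : Fin 2 →₀ ℕ) ≠ e2 := fne (i := 1) (by simp [he2])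
  have n03 : (0 : Fin 2 →₀ ℕ) ≠ e3 := fne (i := 0) (by simp [he3])
  have n04 : (0 : Fin 2 →₀ ℕ) ≠ e4 := fne (i := 0) (by simp [he4])
  have n05 : (0 : Fin 2 →₀ ℕ) ≠ e5 := fne (i := 1) (by simp [he5])
  have n12 : e1 ≠ e2 := fne (i := 0) (by simp [he1, he2, Finsupp.single_apply])
  have n13 : e1 ≠ e3 := fne (i := 0) (by simp [he1, he3])
  have n14 : e1 ≠ e4 := fne (i := 1) (by simp [he1, he4, Finsupp.single_apply])
  have n15 : e1 ≠ e5 := fne (i := 1) (by simp [he1, he5, Finsupp.single_apply])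
  have n23 : e2 ≠ e3 := fne (i := 1) (by simp [he2, he3, Finsupp.single_apply])
  have n24 : e2 ≠ e4 := fne (i := 0) (by simp [he2, he4, Finsupp.single_apply])
  have n25 : e2 ≠ e5 := fne (i := 1) (by simp [he2, he5, Finsupp.single_apply])
  have n34 : e3 ≠ e4 := fne (i := 0) (by simp [he3, he4, Finsupp.single_apply])
  have n35 : e3 ≠ e5 := fne (i := 0) (by simp [he3, he5, Finsupp.single_apply])
  have n45 : e4 ≠ e5 := fne (i := 0) (by simp [he4, he5, Finsupp.single_apply])
  conv_lhs => rw [hFsum]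
  rw [Finset.sum_insert (by simp [Finset.mem_insert, n01, n02, n03, n04, n05]),
      Finset.sum_insert (by simp [Finset.mem_insert, n12, n13, n14, n15]),
      Finset.sum_insert (by simp [Finset.mem_insert, n23, n24, n25]),
      Finset.sum_insert (by simp [Finset.mem_insert, n34, n35]),
      Finset.sum_insert (by simp [Finset.mem_insert, n45]),
      Finset.sum_singleton]
  rw [he1, he2, he3, he4, he5]
  simp only [C_apply, X, X_pow_eq_monomial, monomial_mul, monomial_pow, one_pow,
    mul_one, one_mul, zero_add, add_zero, Finsupp.smul_single, smul_eq_mul]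
  ring

lemma pev_expand (F : MvPolynomial (Fin 2) ℝ)
    (c0 c1 c2 c3 c4 c5 : ℝ)
    (hF : F = C c0 + C c1 * X 0 + C c2 * X 1 + C c3 * X 0 ^ 2 + C c4 * (X 0 * X 1)
        + C c5 * X 1 ^ 2) :
    (∀ w : ℝ × ℝ, pev F w = c0 + c1 * w.1 + c2 * w.2 + c3 * w.1^2 + c4 * w.1 * w.2 + c5 * w.2^2)
    ∧ (∀ w : ℝ × ℝ, pev (pderiv 0 F) w = c1 + 2*c3*w.1 + c4*w.2)
    ∧ (∀ w : ℝ × ℝ, pev (pderiv 1 F) w = c2 + c4*w.1 + 2*c5*w.2)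
    ∧ (∀ w : ℝ × ℝ, pev (pderiv 0 (pderiv 0 F)) w = 2*c3)
    ∧ (∀ w : ℝ × ℝ, pev (pderiv 1 (pderiv 0 F)) w = c4)
    ∧ (∀ w : ℝ × ℝ, pev (pderiv 1 (pderiv 1 F)) w = 2*c5) := by
  subst hF
  have hp2 : ∀ i : Fin 2, pderiv i (2 : MvPolynomial (Fin 2) ℝ) = 0 := by
    intro i; rw [show (2 : MvPolynomial (Fin 2) ℝ) = C 2 from by rw [show (2:ℝ) = 1+1 from by norm_num, map_add, map_one]; norm_num]; simp
  refine ⟨?_, ?_, ?_, ?_, ?_, ?_⟩ <;> intro w <;>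
    simp [pev, pderiv_mul, pderiv_pow, pderiv_X_self, pderiv_X_of_ne, hp2,
      Matrix.cons_val_zero, Matrix.cons_val_one, Matrix.head_cons] <;> ring

def qf (h0 h1 h2 h3 h4 h5 : ℝ) (u : ℝ × ℝ × ℝ) : ℝ :=
  h3 * u.1^2 + h4 * u.1 * u.2.1 + h5 * u.2.1^2 + h1 * u.1 * u.2.2
    + h2 * u.2.1 * u.2.2 + h0 * u.2.2^2

def bf (h0 h1 h2 h3 h4 h5 : ℝ) (u v : ℝ × ℝ × ℝ) : ℝ :=
  2*h3*u.1*v.1 + h4*(u.1*v.2.1 + u.2.1*v.1) + 2*h5*u.2.1*v.2.1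
    + h1*(u.1*v.2.2 + u.2.2*v.1) + h2*(u.2.1*v.2.2 + u.2.2*v.2.1) + 2*h0*u.2.2*v.2.2

def rf (h0 h1 h2 h3 h4 h5 : ℝ) (S Y : ℝ × ℝ × ℝ) : ℝ × ℝ × ℝ :=
  (qf h0 h1 h2 h3 h4 h5 S * Y.1 - bf h0 h1 h2 h3 h4 h5 Y S * S.1,
   qf h0 h1 h2 h3 h4 h5 S * Y.2.1 - bf h0 h1 h2 h3 h4 h5 Y S * S.2.1,
   qf h0 h1 h2 h3 h4 h5 S * Y.2.2 - bf h0 h1 h2 h3 h4 h5 Y S * S.2.2)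

def mf (h0 h1 h2 h3 h4 h5 : ℝ) (P Q Y : ℝ × ℝ × ℝ) : ℝ × ℝ × ℝ :=
  (bf h0 h1 h2 h3 h4 h5 P Q * Y.1 - bf h0 h1 h2 h3 h4 h5 Y P * Q.1
      - bf h0 h1 h2 h3 h4 h5 Y Q * P.1,
   bf h0 h1 h2 h3 h4 h5 P Q * Y.2.1 - bf h0 h1 h2 h3 h4 h5 Y P * Q.2.1
      - bf h0 h1 h2 h3 h4 h5 Y Q * P.2.1,
   bf h0 h1 h2 h3 h4 h5 P Q * Y.2.2 - bf h0 h1 h2 h3 h4 h5 Y P * Q.2.2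
      - bf h0 h1 h2 h3 h4 h5 Y Q * P.2.2)

variable {h0 h1 h2 h3 h4 h5 : ℝ}

lemma smul3 (c : ℝ) (u : ℝ × ℝ × ℝ) : c • u = (c * u.1, c * u.2.1, c * u.2.2) := rfl
lemma add3 (u v : ℝ × ℝ × ℝ) : u + v = (u.1 + v.1, u.2.1 + v.2.1, u.2.2 + v.2.2) := rfl

lemma rf_smul (S Y : ℝ × ℝ × ℝ) (c : ℝ) :
    rf h0 h1 h2 h3 h4 h5 S (c • Y) = c • rf h0 h1 h2 h3 h4 h5 S Y := by
  simp only [smul3, rf, bf, qf, Prod.mk.injEq]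
  refine ⟨by ring, by ring, by ring⟩

lemma rf_add (S Y Z : ℝ × ℝ × ℝ) :
    rf h0 h1 h2 h3 h4 h5 S (Y + Z) = rf h0 h1 h2 h3 h4 h5 S Y + rf h0 h1 h2 h3 h4 h5 S Z := by
  simp only [add3, rf, bf, qf, Prod.mk.injEq]
  refine ⟨by ring, by ring, by ring⟩

lemma rf_rf (S Y : ℝ × ℝ × ℝ) :
    rf h0 h1 h2 h3 h4 h5 S (rf h0 h1 h2 h3 h4 h5 S Y) = (qf h0 h1 h2 h3 h4 h5 S)^2 • Y := by
  simp only [smul3, rf, bf, qf, Prod.mk.injEq]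
  refine ⟨by ring, by ring, by ring⟩

lemma rf_combo (t : ℝ) (P Q Y : ℝ × ℝ × ℝ) :
    rf h0 h1 h2 h3 h4 h5 ((1-t) • P + t • Q) Y
      = (1-t)^2 • rf h0 h1 h2 h3 h4 h5 P Y + t^2 • rf h0 h1 h2 h3 h4 h5 Q Y
        + (t*(1-t)) • mf h0 h1 h2 h3 h4 h5 P Q Y := by
  simp only [smul3, add3, rf, mf, bf, qf, Prod.mk.injEq]
  refine ⟨by ring, by ring, by ring⟩

set_option maxHeartbeats 4000000 in
lemma core2 (P Q Y : ℝ × ℝ × ℝ) :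
    rf h0 h1 h2 h3 h4 h5 P (rf h0 h1 h2 h3 h4 h5 Q (mf h0 h1 h2 h3 h4 h5 P Q Y))
      = mf h0 h1 h2 h3 h4 h5 P Q (rf h0 h1 h2 h3 h4 h5 Q (rf h0 h1 h2 h3 h4 h5 P Y)) := by
  simp only [qf, bf, rf, mf, Prod.mk.injEq]
  refine ⟨by ring, by ring, by ring⟩

lemma core (t : ℝ) (P Q Y : ℝ × ℝ × ℝ) :
    rf h0 h1 h2 h3 h4 h5 P (rf h0 h1 h2 h3 h4 h5 Q
        (rf h0 h1 h2 h3 h4 h5 ((1-t) • P + t • Q) Y))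
      = rf h0 h1 h2 h3 h4 h5 ((1-t) • P + t • Q) (rf h0 h1 h2 h3 h4 h5 Q
          (rf h0 h1 h2 h3 h4 h5 P Y)) := by
  rw [rf_combo, rf_combo]
  simp only [rf_add, rf_smul, rf_rf, core2]

lemma six_refl (t : ℝ) (P Q Y : ℝ × ℝ × ℝ) :
    rf h0 h1 h2 h3 h4 h5 ((1-t) • P + t • Q) (rf h0 h1 h2 h3 h4 h5 Q
      (rf h0 h1 h2 h3 h4 h5 P (rf h0 h1 h2 h3 h4 h5 ((1-t) • P + t • Q)
        (rf h0 h1 h2 h3 h4 h5 Q (rf h0 h1 h2 h3 h4 h5 P Y)))))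
      = ((qf h0 h1 h2 h3 h4 h5 P)^2 * (qf h0 h1 h2 h3 h4 h5 Q)^2
          * (qf h0 h1 h2 h3 h4 h5 ((1-t) • P + t • Q))^2) • Y := by
  rw [show rf h0 h1 h2 h3 h4 h5 ((1-t) • P + t • Q)
        (rf h0 h1 h2 h3 h4 h5 Q (rf h0 h1 h2 h3 h4 h5 P Y))
      = rf h0 h1 h2 h3 h4 h5 P (rf h0 h1 h2 h3 h4 h5 Q
          (rf h0 h1 h2 h3 h4 h5 ((1-t) • P + t • Q) Y)) from (core t P Q Y).symm]
  simp only [rf_rf, rf_smul]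
  all_goals module

lemma six_refl_eq (P R Y : ℝ × ℝ × ℝ) :
    rf h0 h1 h2 h3 h4 h5 R (rf h0 h1 h2 h3 h4 h5 P
      (rf h0 h1 h2 h3 h4 h5 P (rf h0 h1 h2 h3 h4 h5 R
        (rf h0 h1 h2 h3 h4 h5 P (rf h0 h1 h2 h3 h4 h5 P Y)))))
      = ((qf h0 h1 h2 h3 h4 h5 P)^2 * (qf h0 h1 h2 h3 h4 h5 P)^2
          * (qf h0 h1 h2 h3 h4 h5 R)^2) • Y := by
  simp only [rf_rf, rf_smul]
  all_goals module

def XX (y : ℝ × ℝ) : ℝ × ℝ × ℝ := (y.1, y.2, 1)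

lemma qf_smul (h0 h1 h2 h3 h4 h5 c : ℝ) (u : ℝ × ℝ × ℝ) :
    qf h0 h1 h2 h3 h4 h5 (c • u) = c^2 * qf h0 h1 h2 h3 h4 h5 u := by
  simp only [qf, Prod.smul_fst, Prod.smul_snd, smul_eq_mul]; ring

lemma qf_rf (h0 h1 h2 h3 h4 h5 : ℝ) (S Y : ℝ × ℝ × ℝ) :
    qf h0 h1 h2 h3 h4 h5 (rf h0 h1 h2 h3 h4 h5 S Y)
      = (qf h0 h1 h2 h3 h4 h5 S)^2 * qf h0 h1 h2 h3 h4 h5 Y := by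
  simp only [qf, bf, rf]; ring


set_option maxHeartbeats 2000000 in
/-- The workhorse: one Manin step is a scaled `Q`-reflection. -/
lemma step (Fa Fb : MvPolynomial (Fin 2) ℝ)
    (a0 a1 a2 a3 a4 a5 b0 b1 b2 b3 b4 b5 : ℝ)
    (hA0 : ∀ w : ℝ × ℝ, pev Fa w = a0 + a1 * w.1 + a2 * w.2 + a3 * w.1^2 + a4 * w.1 * w.2 + a5 * w.2^2)
    (hA1 : ∀ w : ℝ × ℝ, pev (pderiv 0 Fa) w = a1 + 2*a3*w.1 + a4*w.2)
    (hA2 : ∀ w : ℝ × ℝ, pev (pderiv 1 Fa) w = a2 + a4*w.1 + 2*a5*w.2)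
    (hA3 : ∀ w : ℝ × ℝ, pev (pderiv 0 (pderiv 0 Fa)) w = 2*a3)
    (hA4 : ∀ w : ℝ × ℝ, pev (pderiv 1 (pderiv 0 Fa)) w = a4)
    (hA5 : ∀ w : ℝ × ℝ, pev (pderiv 1 (pderiv 1 Fa)) w = 2*a5)
    (hB0 : ∀ w : ℝ × ℝ, pev Fb w = b0 + b1 * w.1 + b2 * w.2 + b3 * w.1^2 + b4 * w.1 * w.2 + b5 * w.2^2)
    (hB1 : ∀ w : ℝ × ℝ, pev (pderiv 0 Fb) w = b1 + 2*b3*w.1 + b4*w.2)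
    (hB2 : ∀ w : ℝ × ℝ, pev (pderiv 1 Fb) w = b2 + b4*w.1 + 2*b5*w.2)
    (hB3 : ∀ w : ℝ × ℝ, pev (pderiv 0 (pderiv 0 Fb)) w = 2*b3)
    (hB4 : ∀ w : ℝ × ℝ, pev (pderiv 1 (pderiv 0 Fb)) w = b4)
    (hB5 : ∀ w : ℝ × ℝ, pev (pderiv 1 (pderiv 1 Fb)) w = 2*b5)
    (al be : ℝ)
    (s x : ℝ × ℝ) (lam : ℝ)
    (hpa : pev Fa x = lam * al) (hpb : pev Fb x = lam * be)
    (hden : den Fa Fb 2 s x ≠ 0) :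
    qf (be*a0-al*b0) (be*a1-al*b1) (be*a2-al*b2) (be*a3-al*b3) (be*a4-al*b4) (be*a5-al*b5)
        (s.1 - x.1, s.2 - x.2, 0) ≠ 0
    ∧ qf (be*a0-al*b0) (be*a1-al*b1) (be*a2-al*b2) (be*a3-al*b3) (be*a4-al*b4) (be*a5-al*b5)
        (s.1 - x.1, s.2 - x.2, 0) • XX (manin Fa Fb 2 s x)
      = rf (be*a0-al*b0) (be*a1-al*b1) (be*a2-al*b2) (be*a3-al*b3) (be*a4-al*b4) (be*a5-al*b5)
          (XX s) (XX x)
    ∧ qf (be*a0-al*b0) (be*a1-al*b1) (be*a2-al*b2) (be*a3-al*b3) (be*a4-al*b4) (be*a5-al*b5)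
        (XX (manin Fa Fb 2 s x)) = 0 := by
  have hx : qf (be*a0-al*b0) (be*a1-al*b1) (be*a2-al*b2) (be*a3-al*b3) (be*a4-al*b4)
      (be*a5-al*b5) (XX x) = 0 := by
    simp only [qf, XX]
    linear_combination be*hpa - be*(hA0 x) + al*(hB0 x) - al*hpb
  have hG1 : G1 Fa Fb s x
      = -(lam * bf (be*a0-al*b0) (be*a1-al*b1) (be*a2-al*b2) (be*a3-al*b3) (be*a4-al*b4)
          (be*a5-al*b5) (XX x) (s.1 - x.1, s.2 - x.2, 0)) := by
    simp only [G1, d1, hA1, hA2, hB1, hB2, hpa, hpb, bf, XX]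
    ring
  have hdeneq : den Fa Fb 2 s x
      = 2 * lam * qf (be*a0-al*b0) (be*a1-al*b1) (be*a2-al*b2) (be*a3-al*b3) (be*a4-al*b4)
          (be*a5-al*b5) (s.1 - x.1, s.2 - x.2, 0) := by
    simp only [den, G2, G1, d1, d2, hA1, hA2, hA3, hA4, hA5, hB1, hB2, hB3,
      hB4, hB5, hpa, hpb, qf]
    push_cast
    ring
  have hlam : lam ≠ 0 := fun h => hden (by rw [hdeneq, h]; ring)
  have hqVne : qf (be*a0-al*b0) (be*a1-al*b1) (be*a2-al*b2) (be*a3-al*b3) (be*a4-al*b4)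
      (be*a5-al*b5) (s.1 - x.1, s.2 - x.2, 0) ≠ 0 := by
    intro h; exact hden (by rw [hdeneq, h]; ring)
  have hz : (2 * G1 Fa Fb s x / den Fa Fb 2 s x)
        * qf (be*a0-al*b0) (be*a1-al*b1) (be*a2-al*b2) (be*a3-al*b3) (be*a4-al*b4)
          (be*a5-al*b5) (s.1 - x.1, s.2 - x.2, 0)
      = -(bf (be*a0-al*b0) (be*a1-al*b1) (be*a2-al*b2) (be*a3-al*b3) (be*a4-al*b4)
          (be*a5-al*b5) (XX x) (s.1 - x.1, s.2 - x.2, 0)) := by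
    rw [hG1, hdeneq]
    field_simp
  have hvec : qf (be*a0-al*b0) (be*a1-al*b1) (be*a2-al*b2) (be*a3-al*b3) (be*a4-al*b4)
        (be*a5-al*b5) (s.1 - x.1, s.2 - x.2, 0) • XX (manin Fa Fb 2 s x)
      = rf (be*a0-al*b0) (be*a1-al*b1) (be*a2-al*b2) (be*a3-al*b3) (be*a4-al*b4)
          (be*a5-al*b5) (XX s) (XX x) := by
    simp only [manin, XX, Prod.smul_fst, Prod.smul_snd, Prod.fst_add, Prod.snd_add,
      Prod.fst_sub, Prod.snd_sub, smul_eq_mul, rf, Prod.smul_mk, Prod.mk.injEq] at hz hx ⊢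
    simp only [qf, bf] at hz hx ⊢
    refine ⟨?_, ?_, ?_⟩
    · linear_combination (s.1 - x.1) * hz + (2*s.1 - x.1) * hx
    · linear_combination (s.2 - x.2) * hz + (2*s.2 - x.2) * hx
    · linear_combination hx
  refine ⟨hqVne, hvec, ?_⟩
  have hcq := congrArg (qf (be*a0-al*b0) (be*a1-al*b1) (be*a2-al*b2) (be*a3-al*b3)
    (be*a4-al*b4) (be*a5-al*b5)) hvec
  rw [qf_smul, qf_rf, hx, mul_zero] at hcq
  have := mul_ne_zero hqVne hqVne
  rcases mul_eq_zero.mp hcq with h | h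
  · exact absurd h (by positivity)
  · exact h
set_option maxHeartbeats 2000000 in
/-- for a quadratic pencil and three collinear involution points
`p, q, r`, the map `φ = ι_r ∘ ι_q ∘ ι_p` (with `D = 2`) is an involution wherever
all six successive applications occurring in `φ(φ(w))` are defined.  In particular
`ι_r` is a reversing symmetry of `τ = ι_q ∘ ι_p` for every `r` on the line
through `p` and `q`. -/
theorem pascal_reversing_symmetry
    (Fa Fb : MvPolynomial (Fin 2) ℝ)
    (hFa : Fa.totalDegree ≤ 2) (hFb : Fb.totalDegree ≤ 2)
    (p q r : ℝ × ℝ) (hcol : Collinear ℝ ({p, q, r} : Set (ℝ × ℝ)))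
    (w : ℝ × ℝ)
    (w1 w2 w3 w4 w5 : ℝ × ℝ)
    (hw1 : w1 = manin Fa Fb 2 p w)
    (hw2 : w2 = manin Fa Fb 2 q w1)
    (hw3 : w3 = manin Fa Fb 2 r w2)
    (hw4 : w4 = manin Fa Fb 2 p w3)
    (hw5 : w5 = manin Fa Fb 2 q w4)
    (h1 : den Fa Fb 2 p w ≠ 0)
    (h2 : den Fa Fb 2 q w1 ≠ 0)
    (h3 : den Fa Fb 2 r w2 ≠ 0)
    (h4 : den Fa Fb 2 p w3 ≠ 0)
    (h5 : den Fa Fb 2 q w4 ≠ 0)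
    (h6 : den Fa Fb 2 r w5 ≠ 0) :
    manin Fa Fb 2 r w5 = w := by
  obtain ⟨a0, a1, a2, a3, a4, a5, hFaEq⟩ := quad_structure Fa hFa
  obtain ⟨b0, b1, b2, b3, b4, b5, hFbEq⟩ := quad_structure Fb hFb
  obtain ⟨hA0, hA1, hA2, hA3, hA4, hA5⟩ := pev_expand Fa a0 a1 a2 a3 a4 a5 hFaEq
  obtain ⟨hB0, hB1, hB2, hB3, hB4, hB5⟩ := pev_expand Fb b0 b1 b2 b3 b4 b5 hFbEq
  set al := pev Fa w with hal
  set be := pev Fb w with hbe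
  -- (al, be) ≠ (0, 0)
  have hab : ¬(al = 0 ∧ be = 0) := by
    rintro ⟨ha, hb⟩
    exact h1 (by simp [den, G1, G2, ← hal, ← hbe, ha, hb])
  have habs : al^2 + be^2 ≠ 0 := by
    intro h
    exact hab ⟨by nlinarith [sq_nonneg al, sq_nonneg be], by nlinarith [sq_nonneg al, sq_nonneg be]⟩
  -- points on the conic give a pencil parameter lam
  have mk_lam : ∀ y : ℝ × ℝ,
      qf (be*a0-al*b0) (be*a1-al*b1) (be*a2-al*b2) (be*a3-al*b3) (be*a4-al*b4) (be*a5-al*b5)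
        (XX y) = 0 →
      ∃ lam : ℝ, pev Fa y = lam * al ∧ pev Fb y = lam * be := by
    intro y hy
    have key : be * pev Fa y - al * pev Fb y = 0 := by
      simp only [qf, XX] at hy
      linear_combination hy + be * (hA0 y) - al * (hB0 y)
    refine ⟨(pev Fa y * al + pev Fb y * be) / (al^2 + be^2), ?_, ?_⟩
    · rw [div_mul_eq_mul_div, eq_div_iff habs]
      linear_combination be * key
    · rw [div_mul_eq_mul_div, eq_div_iff habs]
      linear_combination (-al) * key
  -- the six Manin steps as scaled reflections
  have st1 := step Fa Fb a0 a1 a2 a3 a4 a5 b0 b1 b2 b3 b4 b5 hA0 hA1 hA2 hA3 hA4 hA5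
    hB0 hB1 hB2 hB3 hB4 hB5 al be p w 1 (by rw [one_mul]) (by rw [one_mul]) h1
  obtain ⟨c1ne, E1, hq1⟩ := st1
  rw [← hw1] at E1 hq1
  obtain ⟨lam1, hpa1, hpb1⟩ := mk_lam w1 hq1
  have st2 := step Fa Fb a0 a1 a2 a3 a4 a5 b0 b1 b2 b3 b4 b5 hA0 hA1 hA2 hA3 hA4 hA5
    hB0 hB1 hB2 hB3 hB4 hB5 al be q w1 lam1 hpa1 hpb1 h2
  obtain ⟨c2ne, E2, hq2⟩ := st2
  rw [← hw2] at E2 hq2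
  obtain ⟨lam2, hpa2, hpb2⟩ := mk_lam w2 hq2
  have st3 := step Fa Fb a0 a1 a2 a3 a4 a5 b0 b1 b2 b3 b4 b5 hA0 hA1 hA2 hA3 hA4 hA5
    hB0 hB1 hB2 hB3 hB4 hB5 al be r w2 lam2 hpa2 hpb2 h3
  obtain ⟨c3ne, E3, hq3⟩ := st3
  rw [← hw3] at E3 hq3
  obtain ⟨lam3, hpa3, hpb3⟩ := mk_lam w3 hq3
  have st4 := step Fa Fb a0 a1 a2 a3 a4 a5 b0 b1 b2 b3 b4 b5 hA0 hA1 hA2 hA3 hA4 hA5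
    hB0 hB1 hB2 hB3 hB4 hB5 al be p w3 lam3 hpa3 hpb3 h4
  obtain ⟨c4ne, E4, hq4⟩ := st4
  rw [← hw4] at E4 hq4
  obtain ⟨lam4, hpa4, hpb4⟩ := mk_lam w4 hq4
  have st5 := step Fa Fb a0 a1 a2 a3 a4 a5 b0 b1 b2 b3 b4 b5 hA0 hA1 hA2 hA3 hA4 hA5
    hB0 hB1 hB2 hB3 hB4 hB5 al be q w4 lam4 hpa4 hpb4 h5
  obtain ⟨c5ne, E5, hq5⟩ := st5
  rw [← hw5] at E5 hq5
  obtain ⟨lam5, hpa5, hpb5⟩ := mk_lam w5 hq5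
  have st6 := step Fa Fb a0 a1 a2 a3 a4 a5 b0 b1 b2 b3 b4 b5 hA0 hA1 hA2 hA3 hA4 hA5
    hB0 hB1 hB2 hB3 hB4 hB5 al be r w5 lam5 hpa5 hpb5 h6
  obtain ⟨c6ne, E6, hq6⟩ := st6
  -- abbreviations
  set H0 := be*a0-al*b0
  set H1 := be*a1-al*b1
  set H2 := be*a2-al*b2
  set H3 := be*a3-al*b3
  set H4 := be*a4-al*b4
  set H5 := be*a5-al*b5
  set x6 := manin Fa Fb 2 r w5 with hx6
  set c1 := qf H0 H1 H2 H3 H4 H5 (p.1 - w.1, p.2 - w.2, 0) with hc1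
  set c2 := qf H0 H1 H2 H3 H4 H5 (q.1 - w1.1, q.2 - w1.2, 0) with hc2
  set c3 := qf H0 H1 H2 H3 H4 H5 (r.1 - w2.1, r.2 - w2.2, 0) with hc3
  set c4 := qf H0 H1 H2 H3 H4 H5 (p.1 - w3.1, p.2 - w3.2, 0) with hc4
  set c5 := qf H0 H1 H2 H3 H4 H5 (q.1 - w4.1, q.2 - w4.2, 0) with hc5
  set c6 := qf H0 H1 H2 H3 H4 H5 (r.1 - w5.1, r.2 - w5.2, 0) with hc6
  -- chain the six reflections
  have T5 : (c5*c6) • XX x6 = rf H0 H1 H2 H3 H4 H5 (XX r)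
      (rf H0 H1 H2 H3 H4 H5 (XX q) (XX w4)) := by
    rw [mul_smul, E6, ← rf_smul, E5]
  have T4 : (c4*(c5*c6)) • XX x6 = rf H0 H1 H2 H3 H4 H5 (XX r)
      (rf H0 H1 H2 H3 H4 H5 (XX q) (rf H0 H1 H2 H3 H4 H5 (XX p) (XX w3))) := by
    rw [mul_smul, T5, ← rf_smul, ← rf_smul, E4]
  have T3 : (c3*(c4*(c5*c6))) • XX x6 = rf H0 H1 H2 H3 H4 H5 (XX r)
      (rf H0 H1 H2 H3 H4 H5 (XX q) (rf H0 H1 H2 H3 H4 H5 (XX p)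
        (rf H0 H1 H2 H3 H4 H5 (XX r) (XX w2)))) := by
    rw [mul_smul, T4, ← rf_smul, ← rf_smul, ← rf_smul, E3]
  have T2 : (c2*(c3*(c4*(c5*c6)))) • XX x6 = rf H0 H1 H2 H3 H4 H5 (XX r)
      (rf H0 H1 H2 H3 H4 H5 (XX q) (rf H0 H1 H2 H3 H4 H5 (XX p)
        (rf H0 H1 H2 H3 H4 H5 (XX r) (rf H0 H1 H2 H3 H4 H5 (XX q) (XX w1))))) := by
    rw [mul_smul, T3, ← rf_smul, ← rf_smul, ← rf_smul, ← rf_smul, E2]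
  have T : (c1*(c2*(c3*(c4*(c5*c6))))) • XX x6
      = rf H0 H1 H2 H3 H4 H5 (XX r) (rf H0 H1 H2 H3 H4 H5 (XX q)
          (rf H0 H1 H2 H3 H4 H5 (XX p) (rf H0 H1 H2 H3 H4 H5 (XX r)
            (rf H0 H1 H2 H3 H4 H5 (XX q) (rf H0 H1 H2 H3 H4 H5 (XX p) (XX w)))))) := by
    rw [mul_smul, T2, ← rf_smul, ← rf_smul, ← rf_smul, ← rf_smul, ← rf_smul, E1]
  -- use collinearity to close the hexagon
  have hK : ∃ K : ℝ, rf H0 H1 H2 H3 H4 H5 (XX r) (rf H0 H1 H2 H3 H4 H5 (XX q)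
          (rf H0 H1 H2 H3 H4 H5 (XX p) (rf H0 H1 H2 H3 H4 H5 (XX r)
            (rf H0 H1 H2 H3 H4 H5 (XX q) (rf H0 H1 H2 H3 H4 H5 (XX p) (XX w))))))
        = K • XX w := by
    obtain ⟨v, hv⟩ := (collinear_iff_of_mem (Set.mem_insert p {q, r})).mp hcol
    obtain ⟨cq, hcq⟩ := hv q (by simp)
    obtain ⟨cr, hcr⟩ := hv r (by simp)
    by_cases hcq0 : cq = 0
    · have hqp : q = p := by rw [hcq, hcq0, zero_smul, zero_vadd]
      rw [hqp]
      exact ⟨_, six_refl_eq (XX p) (XX r) (XX w)⟩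
    · have hq1c : q.1 = cq * v.1 + p.1 := by rw [hcq]; rfl
      have hq2c : q.2 = cq * v.2 + p.2 := by rw [hcq]; rfl
      have hr1c : r.1 = cr * v.1 + p.1 := by rw [hcr]; rfl
      have hr2c : r.2 = cr * v.2 + p.2 := by rw [hcr]; rfl
      have hXXr : XX r = (1 - cr/cq) • XX p + (cr/cq) • XX q := by
        simp only [XX, smul3, add3, Prod.mk.injEq]
        refine ⟨?_, ?_, by ring⟩
        · rw [hr1c, hq1c]; field_simp; ring
        · rw [hr2c, hq2c]; field_simp; ring
      rw [hXXr]
      exact ⟨_, six_refl (cr/cq) (XX p) (XX q) (XX w)⟩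
  obtain ⟨K, hKe⟩ := hK
  rw [hKe] at T
  -- compare third coordinates to identify the scalars
  have h33 : c1*(c2*(c3*(c4*(c5*c6)))) = K := by
    have := congrArg (fun u : ℝ × ℝ × ℝ => u.2.2) T
    simpa [XX, smul3] using this
  rw [← h33] at T
  have hCne : c1*(c2*(c3*(c4*(c5*c6)))) ≠ 0 :=
    mul_ne_zero c1ne (mul_ne_zero c2ne (mul_ne_zero c3ne (mul_ne_zero c4ne
      (mul_ne_zero c5ne c6ne))))
  have hXXeq : XX x6 = XX w := smul_right_injective (ℝ × ℝ × ℝ) hCne T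
  have e1 := congrArg (fun u : ℝ × ℝ × ℝ => u.1) hXXeq
  have e2 := congrArg (fun u : ℝ × ℝ × ℝ => u.2.1) hXXeq
  exact Prod.ext e1 e2
end

section
/- Let F_a and F_b be real polynomials in two variables, let p = (c,d) and q = (e,f) be distinct points, and let L(u,v) = (d−f)(u−e) − (c−e)(v−f) be the line through p and q. Fix the involution point to be p (respectively q), and for an integer D ≥ 2 let z_D(F_a, F_b)(u,v) = 2G₁/(2(2−D)G₁ − G₂) denote the quantity defining the generalised Manin involution with degree parameter D. Then for every point (u,v) with L(u,v) ≠ 0, G₁(u,v) ≠ 0 and 2(2−D)G₁ − G₂ ≠ 0 at (u,v), one has z_{D+1}(L·F_a, L·F_b)(u,v) = z_D(F_a, F_b)(u,v); that is, the value of z, and hence the generalised Manin involution, is unchanged when the pencil is multiplied by the line through the two involution points and the degree parameter is raised by one. -/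
open MvPolynomial

/-- The quantity `z = 2G₁/(2(2−D)G₁ − G₂)` defining the generalised Manin involution
with degree parameter `D` and involution point `p`, at the point `w`. -/
noncomputable def zfun (Fa Fb : MvPolynomial (Fin 2) ℝ) (D : ℕ) (p w : ℝ × ℝ) : ℝ :=
  2 * G1 Fa Fb p w / den Fa Fb D p w


lemma pev_mul (F G : MvPolynomial (Fin 2) ℝ) (w : ℝ × ℝ) :
    pev (F * G) w = pev F w * pev G w := by simp [pev]

lemma d1_mul (F G : MvPolynomial (Fin 2) ℝ) (p w : ℝ × ℝ) :
    d1 (F * G) p w = pev F w * d1 G p w + d1 F p w * pev G w := by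
  simp [d1, pev, pderiv_mul]; ring

lemma d2_mul (F G : MvPolynomial (Fin 2) ℝ) (p w : ℝ × ℝ) :
    d2 (F * G) p w = pev F w * d2 G p w + 2 * d1 F p w * d1 G p w + d2 F p w * pev G w := by
  simp [d2, d1, pev, pderiv_mul]; ring

lemma zfun_mul (Fa Fb L : MvPolynomial (Fin 2) ℝ) (p w : ℝ × ℝ)
    (hd1 : d1 L p w = - pev L w) (hd2 : d2 L p w = 0) (D : ℕ)
    (hden : den Fa Fb D p w ≠ 0) (hLw : pev L w ≠ 0) :
    zfun (L * Fa) (L * Fb) (D + 1) p w = zfun Fa Fb D p w := by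
  have hG1 : G1 (L * Fa) (L * Fb) p w = (pev L w) ^ 2 * G1 Fa Fb p w := by
    simp only [G1, pev_mul, d1_mul]; ring
  have hG2 : G2 (L * Fa) (L * Fb) p w
      = (pev L w) ^ 2 * G2 Fa Fb p w - 2 * (pev L w) ^ 2 * G1 Fa Fb p w := by
    simp only [G2, G1, pev_mul, d2_mul, hd1, hd2]; ring
  have hden' : den (L * Fa) (L * Fb) (D + 1) p w = (pev L w) ^ 2 * den Fa Fb D p w := by
    simp only [den, hG1, hG2, Nat.cast_add, Nat.cast_one]; ring
  have h2 : (pev L w) ^ 2 ≠ 0 := pow_ne_zero _ hLw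
  rw [zfun, zfun, hG1, hden']
  rw [show 2 * ((pev L w) ^ 2 * G1 Fa Fb p w) = (pev L w) ^ 2 * (2 * G1 Fa Fb p w) by ring]
  exact mul_div_mul_left _ _ h2

lemma line_d1 (p q r w : ℝ × ℝ) (L : MvPolynomial (Fin 2) ℝ)
    (hL : L = C (p.2 - q.2) * (X 0 - C q.1) - C (p.1 - q.1) * (X 1 - C q.2))
    (hr : (p.2 - q.2) * (r.1 - q.1) - (p.1 - q.1) * (r.2 - q.2) = 0) :
    d1 L r w = - pev L w := by
  subst hL
  have h01 : (pderiv (0 : Fin 2)) (X 1 : MvPolynomial (Fin 2) ℝ) = 0 := by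
    rw [pderiv_X_of_ne]; decide
  have h10 : (pderiv (1 : Fin 2)) (X 0 : MvPolynomial (Fin 2) ℝ) = 0 := by
    rw [pderiv_X_of_ne]; decide
  simp [d1, pev, h01, h10]
  nlinarith [hr]

lemma line_d2 (p q r w : ℝ × ℝ) (L : MvPolynomial (Fin 2) ℝ)
    (hL : L = C (p.2 - q.2) * (X 0 - C q.1) - C (p.1 - q.1) * (X 1 - C q.2)) :
    d2 L r w = 0 := by
  subst hL
  have h01 : (pderiv (0 : Fin 2)) (X 1 : MvPolynomial (Fin 2) ℝ) = 0 := by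
    rw [pderiv_X_of_ne]; decide
  have h10 : (pderiv (1 : Fin 2)) (X 0 : MvPolynomial (Fin 2) ℝ) = 0 := by
    rw [pderiv_X_of_ne]; decide
  simp [d2, pev, h01, h10]

/-- the value of `z` (hence the generalised Manin involution) is
unchanged when the pencil is multiplied by the line `L` through the two involution
points `p` and `q` and the degree parameter is raised from `D` to `D + 1`;
this holds with either `p` or `q` as involution point. -/
theorem z_independent_of_degree
    (Fa Fb : MvPolynomial (Fin 2) ℝ)
    (p q : ℝ × ℝ) (hpq : p ≠ q)
    (L : MvPolynomial (Fin 2) ℝ)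
    (hL : L = C (p.2 - q.2) * (X 0 - C q.1) - C (p.1 - q.1) * (X 1 - C q.2))
    (D : ℕ) (hD : 2 ≤ D) (w : ℝ × ℝ) (hLw : pev L w ≠ 0)
    (hG1p : G1 Fa Fb p w ≠ 0) (hdenp : den Fa Fb D p w ≠ 0)
    (hG1q : G1 Fa Fb q w ≠ 0) (hdenq : den Fa Fb D q w ≠ 0) :
    zfun (L * Fa) (L * Fb) (D + 1) p w = zfun Fa Fb D p w ∧
      zfun (L * Fa) (L * Fb) (D + 1) q w = zfun Fa Fb D q w := by
  refine ⟨zfun_mul Fa Fb L p w (line_d1 p q p w L hL (by ring)) (line_d2 p q p w L hL) D hdenp hLw,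
    zfun_mul Fa Fb L q w (line_d1 p q q w L hL (by ring)) (line_d2 p q q w L hL) D hdenq hLw⟩
end

section
/- Let a, b, c, d, e ∈ ℝ, set V = (b, −a), W = (ad−bc, ae−bd), E = V·W (the dot product), and assume E ≠ 0. Define σ : ℝ² → ℝ² by σ(U) = U − (2(U·W)/E)·V. Then: (i) σ is an involution, σ(σ(U)) = U for all U; (ii) σ leaves the linear form L(U) = au + bv invariant: L(σ(U)) = L(U); (iii) σ leaves the quadratic form Q(U) = cu² + 2duv + ev² invariant: Q(σ(U)) = Q(U); (iv) σ negates the linear form G(U) = U·W: G(σ(U)) = −G(U); (v) σ(V) = −V and σ fixes the vector JW = ( (ae−bd), −(ad−bc) ). -/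
/-- properties of the linear symmetry switch
`σ(U) = U − (2(U·W)/E)·V` with `V = (b,−a)`, `W = (ad−bc, ae−bd)`, `E = V·W ≠ 0`:
it is an involution, it preserves the linear form `L(U) = au+bv` and the quadratic
form `Q(U) = cu²+2duv+ev²`, it negates `G(U) = U·W`, it negates `V` and fixes `JW`. -/
theorem linear_symmetry_switch_properties
    (a b c d e : ℝ)
    (V W : ℝ × ℝ) (hV : V = (b, -a)) (hW : W = (a * d - b * c, a * e - b * d))
    (E : ℝ) (hE : E = V.1 * W.1 + V.2 * W.2) (hE0 : E ≠ 0)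
    (σ : ℝ × ℝ → ℝ × ℝ)
    (hσ : ∀ U : ℝ × ℝ, σ U = U - (2 * (U.1 * W.1 + U.2 * W.2) / E) • V) :
    (∀ U : ℝ × ℝ, σ (σ U) = U) ∧
      (∀ U : ℝ × ℝ, a * (σ U).1 + b * (σ U).2 = a * U.1 + b * U.2) ∧
      (∀ U : ℝ × ℝ,
        c * (σ U).1 ^ 2 + 2 * d * (σ U).1 * (σ U).2 + e * (σ U).2 ^ 2 =
          c * U.1 ^ 2 + 2 * d * U.1 * U.2 + e * U.2 ^ 2) ∧
      (∀ U : ℝ × ℝ, (σ U).1 * W.1 + (σ U).2 * W.2 = -(U.1 * W.1 + U.2 * W.2)) ∧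
      σ V = -V ∧
      σ (W.2, -W.1) = (W.2, -W.1) := by
  subst hV hW
  simp only at hE
  refine ⟨?_, ?_, ?_, ?_, ?_, ?_⟩
  · intro U
    simp only [hσ, Prod.ext_iff, Prod.fst_sub, Prod.snd_sub, Prod.smul_fst, Prod.smul_snd,
      smul_eq_mul]
    constructor <;> (field_simp; rw [hE]; ring)
  · intro U
    simp only [hσ, Prod.fst_sub, Prod.snd_sub, Prod.smul_fst, Prod.smul_snd, smul_eq_mul]
    field_simp
    ring
  · intro U
    simp only [hσ, Prod.fst_sub, Prod.snd_sub, Prod.smul_fst, Prod.smul_snd, smul_eq_mul]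
    field_simp
    rw [hE]; ring
  · intro U
    simp only [hσ, Prod.fst_sub, Prod.snd_sub, Prod.smul_fst, Prod.smul_snd, smul_eq_mul]
    field_simp
    rw [hE]; ring
  · simp only [hσ, Prod.ext_iff, Prod.fst_sub, Prod.snd_sub, Prod.smul_fst, Prod.smul_snd,
      smul_eq_mul, Prod.fst_neg, Prod.snd_neg]
    constructor <;> (field_simp; rw [hE]; ring)
  · simp only [hσ, Prod.ext_iff, Prod.fst_sub, Prod.snd_sub, Prod.smul_fst, Prod.smul_snd,
      smul_eq_mul]
    constructor <;> (field_simp; ring)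
end

section
/- Let F_a, F_b be real polynomials in two variables, let D ≥ 2 be a degree parameter, and let σ : ℝ² → ℝ² be an invertible affine map (so σ maps lines to lines) which is an involution, σ∘σ = id, and is a symmetry of the pencil: F_a∘σ = F_a and F_b∘σ = F_b. Let p ∈ ℝ² and let ι_p and ι_{σ(p)} denote the generalised Manin involutions with degree parameter D and involution points p and σ(p). Then σ intertwines the involutions: for every (u,v) at which the defining denominator of ι_p is nonzero, the defining denominator of ι_{σ(p)} at σ(u,v) is also nonzero and σ(ι_p(u,v)) = ι_{σ(p)}(σ(u,v)). Consequently, with ρ_p = σ∘ι_p, one has ι_{σ(p)}(ι_p(u,v)) = ρ_p(ρ_p(u,v)) wherever both sides are defined; that is, the map τ_p = ι_{σ(p)}∘ι_p admits the root ρ_p. -/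
open MvPolynomial
namespace MvPolynomial

variable {R σ : Type*} [CommRing R]

theorem derivative_aeval_eq_sum [Fintype σ] (s : σ → Polynomial R) (F : MvPolynomial σ R) :
    Polynomial.derivative (aeval s F)
      = ∑ i, aeval s (pderiv i F) * Polynomial.derivative (s i) := by
  classical
  induction F using MvPolynomial.induction_on with
  | C a => simp
  | add p q hp hq => simp only [map_add, hp, hq, add_mul, Finset.sum_add_distrib]
  | mul_X p i hp =>
    simp only [map_mul, aeval_X, Polynomial.derivative_mul, hp, Derivation.leibniz, pderiv_X,
      smul_eq_mul, map_add, add_mul, Finset.sum_add_distrib, Finset.sum_mul]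
    simp [Pi.single_apply, mul_right_comm _ _ (s i), mul_comm (s i), add_comm]

end MvPolynomial

theorem AffineMap.map_add_smul_sub {k V W : Type*} [Ring k] [AddCommGroup V] [Module k V]
    [AddCommGroup W] [Module k W] (f : V →ᵃ[k] W) (w p : V) (t : k) :
    f (w + t • (p - w)) = f w + t • (f p - f w) := by
  simpa [AffineMap.lineMap_apply_module', add_comm] using f.apply_lineMap w p t

noncomputable def lineRestrict (F : MvPolynomial (Fin 2) ℝ) (w v : ℝ × ℝ) : Polynomial ℝ :=
  aeval ![Polynomial.C w.1 + Polynomial.C v.1 * Polynomial.X,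
    Polynomial.C w.2 + Polynomial.C v.2 * Polynomial.X] F

theorem eval_lineRestrict (F : MvPolynomial (Fin 2) ℝ) (w v : ℝ × ℝ) (t : ℝ) :
    (lineRestrict F w v).eval t = pev F (w + t • v) := by
  rw [lineRestrict, pev, ← Polynomial.coe_aeval_eq_eval, comp_aeval_apply]
  change aeval _ F = aeval _ F
  congr 2
  funext i
  fin_cases i <;> simp <;> ring

theorem derivative_lineRestrict (F : MvPolynomial (Fin 2) ℝ) (w v : ℝ × ℝ) :
    Polynomial.derivative (lineRestrict F w v)
      = Polynomial.C v.1 * lineRestrict (pderiv 0 F) w v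
        + Polynomial.C v.2 * lineRestrict (pderiv 1 F) w v := by
  rw [lineRestrict, derivative_aeval_eq_sum, Fin.sum_univ_two]
  simp [lineRestrict]
  ring

theorem d1_eq_eval_derivative (F : MvPolynomial (Fin 2) ℝ) (p w : ℝ × ℝ) :
    d1 F p w = (Polynomial.derivative (lineRestrict F w (p - w))).eval 0 := by
  simp [derivative_lineRestrict, eval_lineRestrict, d1]

theorem d2_eq_eval_derivative_derivative (F : MvPolynomial (Fin 2) ℝ) (p w : ℝ × ℝ) :
    d2 F p w
      = (Polynomial.derivative (Polynomial.derivative (lineRestrict F w (p - w)))).eval 0 := by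
  simp [derivative_lineRestrict, eval_lineRestrict, d2, pderiv_pderiv_comm (0 : Fin 2) 1 F]
  ring

section Invariant

variable (f : (ℝ × ℝ) →ᵃ[ℝ] (ℝ × ℝ)) {F : MvPolynomial (Fin 2) ℝ}

theorem lineRestrict_map_of_invariant (hF : ∀ w, pev F (f w) = pev F w) (p w : ℝ × ℝ) :
    lineRestrict F (f w) (f p - f w) = lineRestrict F w (p - w) :=
  Polynomial.funext fun t => by
    rw [eval_lineRestrict, eval_lineRestrict, ← f.map_add_smul_sub, hF]

theorem d1_map_of_invariant (hF : ∀ w, pev F (f w) = pev F w) (p w : ℝ × ℝ) :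
    d1 F (f p) (f w) = d1 F p w := by
  rw [d1_eq_eval_derivative, d1_eq_eval_derivative, lineRestrict_map_of_invariant f hF]

theorem d2_map_of_invariant (hF : ∀ w, pev F (f w) = pev F w) (p w : ℝ × ℝ) :
    d2 F (f p) (f w) = d2 F p w := by
  rw [d2_eq_eval_derivative_derivative, d2_eq_eval_derivative_derivative,
    lineRestrict_map_of_invariant f hF]

end Invariant

section Pencil

variable {Fa Fb : MvPolynomial (Fin 2) ℝ} (D : ℕ) (f : (ℝ × ℝ) →ᵃ[ℝ] (ℝ × ℝ))
  (hfa : ∀ w, pev Fa (f w) = pev Fa w) (hfb : ∀ w, pev Fb (f w) = pev Fb w)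
include hfa hfb

theorem G1_map (p w : ℝ × ℝ) : G1 Fa Fb (f p) (f w) = G1 Fa Fb p w := by
  rw [G1, G1, d1_map_of_invariant f hfa, d1_map_of_invariant f hfb, hfa, hfb]

theorem G2_map (p w : ℝ × ℝ) : G2 Fa Fb (f p) (f w) = G2 Fa Fb p w := by
  rw [G2, G2, d2_map_of_invariant f hfa, d2_map_of_invariant f hfb, hfa, hfb]

theorem den_map (p w : ℝ × ℝ) : den Fa Fb D (f p) (f w) = den Fa Fb D p w := by
  rw [den, den, G1_map f hfa hfb, G2_map f hfa hfb]

theorem map_manin (p w : ℝ × ℝ) : f (manin Fa Fb D p w) = manin Fa Fb D (f p) (f w) := by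
  rw [manin, manin, f.map_add_smul_sub, G1_map f hfa hfb, den_map D f hfa hfb]

end Pencil

theorem symmetry_switch_gives_root_general
    (Fa Fb : MvPolynomial (Fin 2) ℝ) (D : ℕ)
    (σ : (ℝ × ℝ) ≃ᵃ[ℝ] (ℝ × ℝ))
    (hinv : ∀ w : ℝ × ℝ, σ (σ w) = w)
    (hsa : ∀ w : ℝ × ℝ, pev Fa (σ w) = pev Fa w)
    (hsb : ∀ w : ℝ × ℝ, pev Fb (σ w) = pev Fb w)
    (p w : ℝ × ℝ)
    (h1 : den Fa Fb D p w ≠ 0) :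
    (den Fa Fb D (σ p) (σ w) ≠ 0 ∧
        σ (manin Fa Fb D p w) = manin Fa Fb D (σ p) (σ w)) ∧
      manin Fa Fb D (σ p) (manin Fa Fb D p w) =
        σ (manin Fa Fb D p (σ (manin Fa Fb D p w))) := by
  have hden : den Fa Fb D (σ p) (σ w) = den Fa Fb D p w := den_map D σ.toAffineMap hsa hsb p w
  have hmanin : ∀ p w, σ (manin Fa Fb D p w) = manin Fa Fb D (σ p) (σ w) :=
    map_manin D σ.toAffineMap hsa hsb
  refine ⟨⟨hden ▸ h1, hmanin p w⟩, ?_⟩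
  rw [hmanin p (σ (manin Fa Fb D p w)), hinv]

/-- if `σ` is an invertible affine involution of the plane which is a
symmetry of the pencil (`F_a∘σ = F_a`, `F_b∘σ = F_b`), then `σ` intertwines the
generalised Manin involutions, `σ ∘ ι_p = ι_{σ(p)} ∘ σ`, and consequently
`τ_p = ι_{σ(p)} ∘ ι_p` admits the root `ρ_p = σ ∘ ι_p`. -/
theorem symmetry_switch_gives_root
    (Fa Fb : MvPolynomial (Fin 2) ℝ) (D : ℕ) (hD : 2 ≤ D)
    (σ : (ℝ × ℝ) ≃ᵃ[ℝ] (ℝ × ℝ))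
    (hinv : ∀ w : ℝ × ℝ, σ (σ w) = w)
    (hsa : ∀ w : ℝ × ℝ, pev Fa (σ w) = pev Fa w)
    (hsb : ∀ w : ℝ × ℝ, pev Fb (σ w) = pev Fb w)
    (p w : ℝ × ℝ)
    (h1 : den Fa Fb D p w ≠ 0)
    (h2 : den Fa Fb D (σ p) (manin Fa Fb D p w) ≠ 0)
    (h3 : den Fa Fb D p (σ (manin Fa Fb D p w)) ≠ 0) :
    (den Fa Fb D (σ p) (σ w) ≠ 0 ∧
        σ (manin Fa Fb D p w) = manin Fa Fb D (σ p) (σ w)) ∧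
      manin Fa Fb D (σ p) (manin Fa Fb D p w) =
        σ (manin Fa Fb D p (σ (manin Fa Fb D p w))) :=
  symmetry_switch_gives_root_general Fa Fb D σ hinv hsa hsb p w h1
end

section
/- Let α, β, γ, P, Q ∈ ℝ, set δ = (βP − γ)Q − α(Q+1) and Y = (P,Q), and define σ : ℝ² → ℝ² by σ(u,v) = (u,v) + z·((u,v) − Y) where z = −1 + α/((α+γ)v − βQu + δ). Then: (i) σ is an involution: σ(σ(u,v)) = (u,v) for every (u,v) at which the denominators (α+γ)v − βQu + δ at (u,v) and at σ(u,v) are nonzero; (ii) if S(u,v) = Au+Bv+C and T(u,v) = Du+Ev+F are linear polynomials with AE ≠ BD whose common zero is Y = (P,Q) (i.e. P = (BF−CE)/(AE−BD) and Q = (CD−AF)/(AE−BD)), then σ leaves the ratio S/T invariant: S(σ(u,v))·T(u,v) = S(u,v)·T(σ(u,v)) wherever σ is defined. -/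
/-!
Write `w = p - Y` and `ℓ (x, y) = (α + γ) y - β Q x`. The choice of `δ` makes the denominator
equal to `ℓ w - α`, so `σ p = Y + t • w` with `t = α / (ℓ w - α)`: every line through `Y` is
mapped to itself. Since `ℓ (t • w) - α = α ^ 2 / (ℓ w - α)`, a second application rescales
`t • w` by `(ℓ w - α) / α = t⁻¹`. An affine function vanishing at `Y` gets multiplied by `t`
under `σ`, so the ratio of two of them is preserved.
-/

open AffineMap

theorem AffineMap.mul_apply_lineMap_comm {R V P : Type*} [CommRing R] [AddCommGroup V]
    [Module R V] [AddTorsor V P] {S T : P →ᵃ[R] R} {Y : P} (hS : S Y = 0) (hT : T Y = 0)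
    (p : P) (c : R) :
    S (lineMap Y p c) * T p = S p * T (lineMap Y p c) := by
  simp only [apply_lineMap, hS, hT, lineMap_apply_ring]
  ring

section RadialSwitch

variable {k V P : Type*} [Field k] [AddCommGroup V] [Module k V] [AddTorsor V P]

def radialSwitch (ℓ : V →ₗ[k] k) (α : k) (Y p : P) : P :=
  lineMap Y p (α / (ℓ (p -ᵥ Y) - α))

theorem radialSwitch_vsub_center (ℓ : V →ₗ[k] k) (α : k) (Y p : P) :
    radialSwitch ℓ α Y p -ᵥ Y = (α / (ℓ (p -ᵥ Y) - α)) • (p -ᵥ Y) :=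
  lineMap_vsub_left _ _ _

theorem radialSwitch_radialSwitch {ℓ : V →ₗ[k] k} {α : k} {Y p : P}
    (hp : ℓ (p -ᵥ Y) - α ≠ 0) (hσp : ℓ (radialSwitch ℓ α Y p -ᵥ Y) - α ≠ 0) :
    radialSwitch ℓ α Y (radialSwitch ℓ α Y p) = p := by
  have hα : α ≠ 0 := by
    rintro rfl
    simp [radialSwitch_vsub_center] at hσp
  have hσp_eq : ℓ (radialSwitch ℓ α Y p -ᵥ Y) - α = α ^ 2 / (ℓ (p -ᵥ Y) - α) := by
    rw [radialSwitch_vsub_center, map_smul, smul_eq_mul]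
    field_simp
    ring
  rw [radialSwitch, hσp_eq, radialSwitch, lineMap_lineMap_right]
  convert lineMap_apply_one (k := k) Y p
  field_simp

end RadialSwitch

section PlaneForms

variable {k : Type*} [Field k]

def linearForm₂ (a b : k) : k × k →ₗ[k] k :=
  a • LinearMap.fst k k k + b • LinearMap.snd k k k

def affineForm₂ (a b c : k) : k × k →ᵃ[k] k :=
  (linearForm₂ a b).toAffineMap + AffineMap.const k (k × k) c

@[simp]
theorem linearForm₂_apply (a b : k) (p : k × k) : linearForm₂ a b p = a * p.1 + b * p.2 := rfl

@[simp]
theorem affineForm₂_apply (a b c : k) (p : k × k) :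
    affineForm₂ a b c p = a * p.1 + b * p.2 + c := rfl

theorem affineForm₂_eq_zero_of_cramer {a b c d e f : k} (h : a * e ≠ b * d) :
    let x := ((b * f - c * e) / (a * e - b * d), (c * d - a * f) / (a * e - b * d))
    affineForm₂ a b c x = 0 ∧ affineForm₂ d e f x = 0 := by
  have hΔ : a * e - b * d ≠ 0 := sub_ne_zero.mpr h
  simp only [affineForm₂_apply]
  constructor
  · linear_combination (-c) * mul_inv_cancel₀ hΔ
  · linear_combination (-f) * mul_inv_cancel₀ hΔ

end PlaneForms

/-- the fractional linear symmetry switch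
`σ(u,v) = (u,v) + z·((u,v) − Y)`, `z = −1 + α/((α+γ)v − βQu + δ)`,
`δ = (βP−γ)Q − α(Q+1)`, `Y = (P,Q)`:
(i) `σ` is an involution wherever defined;
(ii) if `S = Au+Bv+C` and `T = Du+Ev+F` are linear forms with `AE ≠ BD` whose common
zero is `Y`, then `σ` leaves the ratio `S/T` invariant. -/
theorem fractional_linear_switch_properties
    (α β γ P Q : ℝ) (δ : ℝ) (hδ : δ = (β * P - γ) * Q - α * (Q + 1))
    (σ : ℝ × ℝ → ℝ × ℝ)
    (hσ : ∀ u v : ℝ,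
      σ (u, v) = (u, v) + (-1 + α / ((α + γ) * v - β * Q * u + δ)) • ((u, v) - (P, Q))) :
    (∀ u v : ℝ,
        (α + γ) * v - β * Q * u + δ ≠ 0 →
        (α + γ) * (σ (u, v)).2 - β * Q * (σ (u, v)).1 + δ ≠ 0 →
        σ (σ (u, v)) = (u, v)) ∧
      (∀ A B C D E F : ℝ, A * E ≠ B * D →
        P = (B * F - C * E) / (A * E - B * D) →
        Q = (C * D - A * F) / (A * E - B * D) →
        ∀ u v : ℝ, (α + γ) * v - β * Q * u + δ ≠ 0 →
          (A * (σ (u, v)).1 + B * (σ (u, v)).2 + C) * (D * u + E * v + F) =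
            (A * u + B * v + C) * (D * (σ (u, v)).1 + E * (σ (u, v)).2 + F)) := by
  set ℓ := linearForm₂ (-(β * Q)) (α + γ)
  have hden : ∀ p : ℝ × ℝ, (α + γ) * p.2 - β * Q * p.1 + δ = ℓ (p -ᵥ (P, Q)) - α := by
    intro p
    simp only [ℓ, linearForm₂_apply, vsub_eq_sub, Prod.fst_sub, Prod.snd_sub, hδ]
    ring
  have hσ_eq : ∀ p, σ p = radialSwitch ℓ α (P, Q) p := by
    rintro ⟨u, v⟩
    rw [hσ, radialSwitch, lineMap_apply_module', ← vsub_eq_sub, ← hden]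
    simp only [vsub_eq_sub]
    module
  refine ⟨fun u v hp hσp => ?_, fun A B C D E F hAE hP hQ u v _ => ?_⟩
  · rw [hσ_eq, hσ_eq]
    refine radialSwitch_radialSwitch ?_ ?_
    · rw [← hden]
      exact hp
    · rw [← hσ_eq, ← hden]
      exact hσp
  · obtain ⟨hS, hT⟩ := affineForm₂_eq_zero_of_cramer (c := C) (f := F) hAE
    rw [← hP, ← hQ] at hS hT
    simpa only [hσ_eq, radialSwitch, affineForm₂_apply] using
      mul_apply_lineMap_comm hS hT (u, v) (α / (ℓ ((u, v) -ᵥ (P, Q)) - α))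
end

section
/- Let a, b, c, d, e ∈ ℝ with E = V·W ≠ 0, where V = (b,−a) and W = (ad−bc, ae−bd), and let σ(U) = U − (2(U·W)/E)·V be the linear symmetry switch. Let L(u,v) = au + bv, Q(u,v) = cu² + 2duv + ev², and define the quadratic polynomials F_a = a₁ + a₂L + a₃L² + a₄Q and F_b = b₁ + L + L² + Q for real constants a₁, a₂, a₃, a₄, b₁. Let p ∈ ℝ², let ι_p be the generalised Manin involution with degree parameter D = 2 and involution point p, and let ρ_p = σ∘ι_p. Then ρ_p maps each curve of the pencil αF_a + βF_b = 0 to itself: for every (u,v) at which ι_p is defined, F_a(ρ_p(u,v))·F_b(u,v) = F_a(u,v)·F_b(ρ_p(u,v)). -/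
open MvPolynomial

set_option maxHeartbeats 2000000 in
lemma taylor_aux (a b c d e k0 k1 k2 k3 : ℝ) (L Q P : MvPolynomial (Fin 2) ℝ)
    (hL : L = C a * X 0 + C b * X 1)
    (hQ : Q = C c * X 0 ^ 2 + 2 * C d * X 0 * X 1 + C e * X 1 ^ 2)
    (hP : P = C k0 + C k1 * L + C k2 * L ^ 2 + C k3 * Q)
    (p w : ℝ × ℝ) (z : ℝ) :
    pev P (w + z • (p - w)) = pev P w + z * d1 P p w + z ^ 2 / 2 * d2 P p w := by
  have h2C : (2 : MvPolynomial (Fin 2) ℝ) = C 2 := (map_ofNat C 2).symm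
  have hQ' : Q = C c * X 0 ^ 2 + C (2 * d) * X 0 * X 1 + C e * X 1 ^ 2 := by
    rw [hQ, h2C, ← C_mul]
  clear hQ
  have h01 : pderiv (0 : Fin 2) (X 1 : MvPolynomial (Fin 2) ℝ) = 0 :=
    pderiv_X_of_ne (by decide)
  have h10 : pderiv (1 : Fin 2) (X 0 : MvPolynomial (Fin 2) ℝ) = 0 :=
    pderiv_X_of_ne (by decide)
  have hp2 : ∀ i : Fin 2, pderiv i (2 : MvPolynomial (Fin 2) ℝ) = 0 := by
    intro i; rw [h2C, pderiv_C]
  subst hL hQ' hP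
  simp only [pev, d1, d2, map_add, pderiv_mul, pderiv_C, pderiv_X_self, h01, h10,
    hp2, map_ofNat, map_natCast, Nat.cast_ofNat, Derivation.map_natCast, pderiv_one,
    map_pow, pderiv_pow, eval_add, eval_mul, eval_pow, eval_C, eval_X, map_one,
    Matrix.cons_val_zero, Matrix.cons_val_one, Matrix.head_cons, Prod.fst_add, Prod.snd_add,
    Prod.smul_fst, Prod.smul_snd, Prod.fst_sub, Prod.snd_sub, smul_eq_mul,
    zero_mul, mul_zero, add_zero, zero_add, mul_one, one_mul, map_zero, eval_zero]
  ring

set_option maxHeartbeats 2000000 in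
lemma sigma_aux (a b c d e k0 k1 k2 k3 E : ℝ)
    (hE : E = b * (a * d - b * c) + (-a) * (a * e - b * d)) (hE0 : E ≠ 0)
    (L Q P : MvPolynomial (Fin 2) ℝ)
    (hL : L = C a * X 0 + C b * X 1)
    (hQ : Q = C c * X 0 ^ 2 + 2 * C d * X 0 * X 1 + C e * X 1 ^ 2)
    (hP : P = C k0 + C k1 * L + C k2 * L ^ 2 + C k3 * Q)
    (U : ℝ × ℝ) :
    pev P (U - (2 * (U.1 * (a * d - b * c) + U.2 * (a * e - b * d)) / E) • (b, -a)) =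
      pev P U := by
  have h2C : (2 : MvPolynomial (Fin 2) ℝ) = C 2 := (map_ofNat C 2).symm
  have hQ' : Q = C c * X 0 ^ 2 + C (2 * d) * X 0 * X 1 + C e * X 1 ^ 2 := by
    rw [hQ, h2C, ← C_mul]
  clear hQ
  subst hL hQ' hP
  simp only [pev, eval_add, eval_mul, eval_pow, eval_C, eval_X,
    Matrix.cons_val_zero, Matrix.cons_val_one, Matrix.head_cons,
    Prod.fst_sub, Prod.snd_sub, Prod.smul_fst, Prod.smul_snd, smul_eq_mul]
  field_simp
  subst hE
  ring

lemma key_identity (A0 A1 A2 B0 B1 B2 : ℝ) (h : -(A0 * B2 - A2 * B0) ≠ 0) :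
    (A0 + 2 * (A0 * B1 - A1 * B0) / -(A0 * B2 - A2 * B0) * A1
        + (2 * (A0 * B1 - A1 * B0) / -(A0 * B2 - A2 * B0)) ^ 2 / 2 * A2) * B0 =
      A0 * (B0 + 2 * (A0 * B1 - A1 * B0) / -(A0 * B2 - A2 * B0) * B1
        + (2 * (A0 * B1 - A1 * B0) / -(A0 * B2 - A2 * B0)) ^ 2 / 2 * B2) := by
  have h' : A0 * B2 - A2 * B0 ≠ 0 := fun hh => h (by rw [hh, neg_zero])
  rw [div_neg, div_eq_mul_inv]
  have hinv := mul_inv_cancel₀ h'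
  generalize hg : (A0 * B2 - A2 * B0)⁻¹ = gi at *
  linear_combination (-(2 * (A0 * B1 - A1 * B0) ^ 2 * gi)) * hinv

/-- the root `ρ_p = σ ∘ ι_p`, where `σ` is the linear symmetry switch
and `ι_p` the generalised Manin involution with `D = 2` of the quadratic pencil built
from the invariant forms `L = au + bv` and `Q = cu² + 2duv + ev²`, maps each curve of
the pencil `αF_a + βF_b = 0` to itself. -/
theorem root_preserves_quadratic_pencil
    (a b c d e a1 a2 a3 a4 b1 : ℝ)
    (V W : ℝ × ℝ) (hV : V = (b, -a)) (hW : W = (a * d - b * c, a * e - b * d))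
    (E : ℝ) (hE : E = V.1 * W.1 + V.2 * W.2) (hE0 : E ≠ 0)
    (σ : ℝ × ℝ → ℝ × ℝ)
    (hσ : ∀ U : ℝ × ℝ, σ U = U - (2 * (U.1 * W.1 + U.2 * W.2) / E) • V)
    (L Q Fa Fb : MvPolynomial (Fin 2) ℝ)
    (hL : L = C a * X 0 + C b * X 1)
    (hQ : Q = C c * X 0 ^ 2 + 2 * C d * X 0 * X 1 + C e * X 1 ^ 2)
    (hFa : Fa = C a1 + C a2 * L + C a3 * L ^ 2 + C a4 * Q)
    (hFb : Fb = C b1 + L + L ^ 2 + Q)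
    (p w : ℝ × ℝ) (hden : den Fa Fb 2 p w ≠ 0) :
    pev Fa (σ (manin Fa Fb 2 p w)) * pev Fb w =
      pev Fa w * pev Fb (σ (manin Fa Fb 2 p w)) := by
  have hFb' : Fb = C b1 + C 1 * L + C 1 * L ^ 2 + C 1 * Q := by
    rw [hFb, map_one, one_mul, one_mul, one_mul]
  have hE' : E = b * (a * d - b * c) + (-a) * (a * e - b * d) := by
    rw [hE, hV, hW]
  set ι := manin Fa Fb 2 p w with hι
  have hσι : σ ι = ι - (2 * (ι.1 * (a * d - b * c) + ι.2 * (a * e - b * d)) / E) • (b, -a) := by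
    rw [hσ ι, hV, hW]
  have hsa : pev Fa (σ ι) = pev Fa ι := by
    rw [hσι]; exact sigma_aux a b c d e a1 a2 a3 a4 E hE' hE0 L Q Fa hL hQ hFa ι
  have hsb : pev Fb (σ ι) = pev Fb ι := by
    rw [hσι]; exact sigma_aux a b c d e b1 1 1 1 E hE' hE0 L Q Fb hL hQ hFb' ι
  have hden' : den Fa Fb 2 p w = -(pev Fa w * d2 Fb p w - d2 Fa p w * pev Fb w) := by
    simp only [den, G1, G2, Nat.cast_ofNat]; ring
  rw [hsa, hsb, hι, manin,
    taylor_aux a b c d e a1 a2 a3 a4 L Q Fa hL hQ hFa p w _,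
    taylor_aux a b c d e b1 1 1 1 L Q Fb hL hQ hFb' p w _, hden']
  simp only [G1]
  exact key_identity _ _ _ _ _ _ (hden' ▸ hden)
end

section
/- Let a ∈ ℝ and define the Lyness map λ(u,v) = (v, (v+a)/u), the horizontal switch ι₁(u,v) = ((a+v)/u, v), the vertical switch ι₂(u,v) = (u, (a+u)/v), and the symmetry switch σ(u,v) = (v,u). Then for all u, v ∈ ℝ with u ≠ 0, v ≠ 0 and v + a ≠ 0: (i) λ preserves the pencil of cubic curves α(u+1)(v+1)(u+v+a) + βuv = 0, i.e. with λ(u,v) = (x,y) one has (x+1)(y+1)(x+y+a)·uv = (u+1)(v+1)(u+v+a)·xy; (ii) λ = σ∘ι₁ = ι₂∘σ; (iii) λ is a QRT root: λ(λ(u,v)) = ι₂(ι₁(u,v)) whenever all intermediate denominators are nonzero. -/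
/-- the Lyness map `λ(u,v) = (v, (v+a)/u)`:
(i) it preserves the pencil of cubic curves `α(u+1)(v+1)(u+v+a) + βuv = 0`;
(ii) `λ = σ∘ι₁ = ι₂∘σ`, where `ι₁, ι₂` are the horizontal and vertical switches and
`σ(u,v) = (v,u)` is the symmetry switch;
(iii) `λ` is a QRT root: `λ∘λ = ι₂∘ι₁`. -/
theorem lyness_map_properties
    (a : ℝ)
    (lyness iota1 iota2 σ : ℝ × ℝ → ℝ × ℝ)
    (hly : ∀ u v : ℝ, lyness (u, v) = (v, (v + a) / u))
    (hi1 : ∀ u v : ℝ, iota1 (u, v) = ((a + v) / u, v))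
    (hi2 : ∀ u v : ℝ, iota2 (u, v) = (u, (a + u) / v))
    (hs : ∀ u v : ℝ, σ (u, v) = (v, u)) :
    ∀ u v : ℝ, u ≠ 0 → v ≠ 0 → v + a ≠ 0 →
      (((lyness (u, v)).1 + 1) * ((lyness (u, v)).2 + 1) *
            ((lyness (u, v)).1 + (lyness (u, v)).2 + a) * (u * v) =
          (u + 1) * (v + 1) * (u + v + a) * ((lyness (u, v)).1 * (lyness (u, v)).2)) ∧
        (lyness (u, v) = σ (iota1 (u, v)) ∧ lyness (u, v) = iota2 (σ (u, v))) ∧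
        lyness (lyness (u, v)) = iota2 (iota1 (u, v)) := by
  intro u v hu hv hva
  refine ⟨?_, ⟨?_, ?_⟩, ?_⟩
  · simp only [hly]
    field_simp
    ring
  · rw [hly, hi1, hs, add_comm a v]
  · rw [hly, hs, hi2, add_comm a v]
  · rw [hly, hly, hi1, hi2, add_comm a v]
    congr 1
    rw [add_comm]
end
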